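/- arXiv:2201.01402 — 5 statements merged into one kernel-verified Lean document; each statement's English description precedes it below -/
import Mathlib

section
/- Pieri-type consequence: with all sums over positive integers and absolutely convergent, ζ_{(3,1)}(2,2,2;2) + ζ_{(2,2)}(2,2;2,2) = Σ_{a ≤ b, a < c, m ≥ 1} [1/(m²(m+a)²(m+c)²b²) + 2/(m(m+a)³(m+c)²b²) + 2/(m(m+a)²(m+c)³b²)] + ζ_{(2,1,1)}(2,2;2;2) + 2ζ_{(2,1,1)}(1,2;3;2) + 2ζ_{(2,1,1)}(1,2;2;3) + 4ζ_{(2,1,1)}(2,2;1;3), where ζ_{(3,1)}(2,2,2;2) = Σ_{a ≤ b ≤ d, a < c} 1/(a²b²d²c²), ζ_{(2,2)}(2,2;2,2) = Σ_{a ≤ b, c ≤ d, a < c, b < d} 1/(a²b²c²d²), and ζ_{(2,1,1)}(s₁₁,s₁₂;s₂₁;s₃₁) = Σ over m₁ < m₂ < m₃ (first column) and m₁ ≤ b (row) of 1/(m₁^{s₁₁} b^{s₁₂} m₂^{s₂₁} m₃^{s₃₁}). -/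
open ENNReal Function

namespace PieriAux

attribute [local instance] Classical.propDecidable

abbrev Q : Type := ℕ × ℕ × ℕ × ℕ

/-! ### Conditions -/

def mcon (q : Q) : Prop := 0 < q.1 ∧ 0 < q.2.1 ∧ q.2.1 ≤ q.2.2.1 ∧ q.2.1 < q.2.2.2
def acon (q : Q) : Prop := 0 < q.1 ∧ q.1 ≤ q.2.1 ∧ q.2.1 ≤ q.2.2.1 ∧ q.1 < q.2.2.2
def bcon (q : Q) : Prop :=
  0 < q.1 ∧ q.1 ≤ q.2.1 ∧ q.1 < q.2.2.1 ∧ q.2.2.1 ≤ q.2.2.2 ∧ q.2.1 < q.2.2.2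
def hcon (q : Q) : Prop := 0 < q.1 ∧ q.1 < q.2.1 ∧ q.2.1 < q.2.2.1 ∧ q.1 ≤ q.2.2.2

/-! ### Summands -/

noncomputable def fsq (q : Q) : ℝ :=
  ((q.1 : ℝ) ^ 2 * (q.2.1 : ℝ) ^ 2 * (q.2.2.1 : ℝ) ^ 2 * (q.2.2.2 : ℝ) ^ 2)⁻¹

noncomputable def hks (s11 s12 s21 s31 : ℕ) (q : Q) : ℝ :=
  ((q.1 : ℝ) ^ s11 * (q.2.2.2 : ℝ) ^ s12 * (q.2.1 : ℝ) ^ s21 * (q.2.2.1 : ℝ) ^ s31)⁻¹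

noncomputable def sS (q : Q) : ℝ :=
  ((q.1 : ℝ) ^ 2 * ((q.1 + q.2.1 : ℕ) : ℝ) ^ 2 * ((q.1 + q.2.2.2 : ℕ) : ℝ) ^ 2
      * (q.2.2.1 : ℝ) ^ 2)⁻¹
    + 2 * ((q.1 : ℝ) * ((q.1 + q.2.1 : ℕ) : ℝ) ^ 3 * ((q.1 + q.2.2.2 : ℕ) : ℝ) ^ 2
      * (q.2.2.1 : ℝ) ^ 2)⁻¹
    + 2 * ((q.1 : ℝ) * ((q.1 + q.2.1 : ℕ) : ℝ) ^ 2 * ((q.1 + q.2.2.2 : ℕ) : ℝ) ^ 3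
      * (q.2.2.1 : ℝ) ^ 2)⁻¹

/-! ### Maps -/

def f1 (q : Q) : Q := (q.2.1, q.1 + q.2.1, q.1 + q.2.2.2, q.2.2.1)
def f2 (q : Q) : Q := (q.2.1, q.2.2.2, q.1 + q.2.2.2, q.2.2.1)
def p1 (q : Q) : Q := (q.2.1, q.2.2.1, q.1, q.2.2.2)
def p2 (q : Q) : Q := (q.2.1, q.1, q.2.2.2, q.2.2.1)
def p3 (q : Q) : Q := (q.2.1, q.2.2.1, q.2.2.2, q.1)
def p4 (q : Q) : Q := (q.1, q.2.1, q.2.2.2, q.2.2.1)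

/-! ### The ENNReal-valued sums -/

noncomputable def EI (p : Q → Prop) (f : Q → ℝ) : ℝ≥0∞ :=
  ∑' q : Q, if p q then ENNReal.ofReal (f q) else 0

/-! ### Generic lemmas -/

lemma tsum_eq_toReal {ι : Type} (f : ι → ℝ) (h : ∀ i, 0 ≤ f i) :
    ∑' i, f i = (∑' i, ENNReal.ofReal (f i)).toReal := by
  rw [ENNReal.tsum_toReal_eq (fun i => ENNReal.ofReal_ne_top)]
  exact tsum_congr fun i => (ENNReal.toReal_ofReal (h i)).symm

lemma tsum_subtype_ite (p : Q → Prop) (f : Q → ℝ≥0∞) :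
    ∑' x : {q : Q // p q}, f x.1 = ∑' q : Q, if p q then f q else 0 := by
  calc ∑' x : {q : Q // p q}, f x.1 = ∑' x : {q : Q | p q}, f x := rfl
    _ = ∑' q : Q, Set.indicator {q : Q | p q} f q := tsum_subtype {q : Q | p q} f
    _ = ∑' q : Q, if p q then f q else 0 :=
        tsum_congr fun q => by by_cases hq : p q <;> simp [Set.indicator, hq]

lemma EI_reindex (p p' : Q → Prop) (f f' : Q → ℝ) (φ : Q → Q)
    (hinj : Function.Injective φ)
    (hcond : ∀ q, p' (φ q) ↔ p q)
    (hrange : ∀ y, p' y → y ∈ Set.range φ)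
    (hval : ∀ q, p q → f' (φ q) = f q) :
    EI p f = EI p' f' := by
  unfold EI
  have h0 : ∀ q : Q, (if p q then ENNReal.ofReal (f q) else 0)
      = (if p' (φ q) then ENNReal.ofReal (f' (φ q)) else 0) := by
    intro q
    by_cases h : p q
    · rw [if_pos h, if_pos ((hcond q).2 h), hval q h]
    · rw [if_neg h, if_neg (fun h' => h ((hcond q).1 h'))]
  rw [tsum_congr h0]
  refine hinj.tsum_eq (f := fun y => if p' y then ENNReal.ofReal (f' y) else 0) ?_
  intro y hy
  by_cases h : p' y
  · exact hrange y h
  · exact absurd (if_neg h) hy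

lemma EI_split (p pa pb : Q → Prop) (f : Q → ℝ)
    (h : ∀ q, (p q ↔ pa q ∨ pb q) ∧ ¬(pa q ∧ pb q)) :
    EI p f = EI pa f + EI pb f := by
  unfold EI
  rw [← Summable.tsum_add ENNReal.summable ENNReal.summable]
  refine tsum_congr fun q => ?_
  obtain ⟨hiff, hnot⟩ := h q
  by_cases h1 : pa q
  · rw [if_pos (hiff.2 (Or.inl h1)), if_pos h1, if_neg (fun h2 => hnot ⟨h1, h2⟩), add_zero]
  · by_cases h2 : pb q
    · rw [if_pos (hiff.2 (Or.inr h2)), if_neg h1, if_pos h2, zero_add]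
    · rw [if_neg (fun hp => ((hiff.1 hp).elim h1 h2)), if_neg h1, if_neg h2, add_zero]


/-! ### Nonnegativity -/

lemma fsq_nonneg (q : Q) : 0 ≤ fsq q := by unfold fsq; positivity

lemma hks_nonneg (s11 s12 s21 s31 : ℕ) (q : Q) : 0 ≤ hks s11 s12 s21 s31 q := by
  unfold hks; positivity

lemma sS_nonneg (q : Q) : 0 ≤ sS q := by unfold sS; positivity

/-! ### The partial fraction identity -/

lemma pf_real (m a b c : ℕ) (hm : 0 < m) (ha : 0 < a) (hab : a ≤ b) (hac : a < c) :
    fsq (m, a, b, c)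
      = sS (m, a, b, c)
        + hks 2 2 2 2 (f1 (m, a, b, c)) + 2 * hks 1 2 3 2 (f1 (m, a, b, c))
        + 2 * hks 1 2 2 3 (f1 (m, a, b, c)) + 2 * hks 2 2 1 3 (f1 (m, a, b, c))
        + hks 2 2 2 2 (f2 (m, a, b, c)) + 2 * hks 2 2 1 3 (f2 (m, a, b, c)) := by
  have hb : 0 < b := lt_of_lt_of_le ha hab
  have hc : 0 < c := lt_trans ha hac
  have hm' : (0:ℝ) < m := by exact_mod_cast hm
  have ha' : (0:ℝ) < a := by exact_mod_cast ha
  have hb' : (0:ℝ) < b := by exact_mod_cast hb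
  have hc' : (0:ℝ) < c := by exact_mod_cast hc
  have hma : (0:ℝ) < (m:ℝ) + a := by linarith
  have hmc : (0:ℝ) < (m:ℝ) + c := by linarith
  simp only [fsq, sS, hks, f1, f2]
  push_cast
  field_simp
  ring

lemma ofReal_decomp (x1 x2 x3 x4 x5 x6 x7 : ℝ) (h1 : 0 ≤ x1) (h2 : 0 ≤ x2) (h3 : 0 ≤ x3)
    (h4 : 0 ≤ x4) (h5 : 0 ≤ x5) (h6 : 0 ≤ x6) (h7 : 0 ≤ x7) :
    ENNReal.ofReal (x1 + x2 + 2 * x3 + 2 * x4 + 2 * x5 + x6 + 2 * x7)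
      = ENNReal.ofReal x1 + ENNReal.ofReal x2 + 2 * ENNReal.ofReal x3
        + 2 * ENNReal.ofReal x4 + 2 * ENNReal.ofReal x5 + ENNReal.ofReal x6
        + 2 * ENNReal.ofReal x7 := by
  have h2' : (0:ℝ) ≤ 2 := by norm_num
  rw [ENNReal.ofReal_add (by positivity) (by positivity),
      ENNReal.ofReal_add (by positivity) (by positivity),
      ENNReal.ofReal_add (by positivity) (by positivity),
      ENNReal.ofReal_add (by positivity) (by positivity),
      ENNReal.ofReal_add (by positivity) (by positivity),
      ENNReal.ofReal_add (by positivity) (by positivity),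
      ENNReal.ofReal_mul h2', ENNReal.ofReal_mul h2', ENNReal.ofReal_mul h2',
      ENNReal.ofReal_mul h2', ENNReal.ofReal_ofNat]

/-! ### The shuffle decomposition -/

lemma shuffle :
    EI mcon fsq
      = EI mcon sS + EI mcon (fun q => hks 2 2 2 2 (f1 q))
        + 2 * EI mcon (fun q => hks 1 2 3 2 (f1 q))
        + 2 * EI mcon (fun q => hks 1 2 2 3 (f1 q))
        + 2 * EI mcon (fun q => hks 2 2 1 3 (f1 q))
        + EI mcon (fun q => hks 2 2 2 2 (f2 q))
        + 2 * EI mcon (fun q => hks 2 2 1 3 (f2 q)) := by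
  unfold EI
  rw [← ENNReal.tsum_mul_left, ← ENNReal.tsum_mul_left, ← ENNReal.tsum_mul_left,
      ← ENNReal.tsum_mul_left,
      ← Summable.tsum_add ENNReal.summable ENNReal.summable,
      ← Summable.tsum_add ENNReal.summable ENNReal.summable,
      ← Summable.tsum_add ENNReal.summable ENNReal.summable,
      ← Summable.tsum_add ENNReal.summable ENNReal.summable,
      ← Summable.tsum_add ENNReal.summable ENNReal.summable,
      ← Summable.tsum_add ENNReal.summable ENNReal.summable]
  refine tsum_congr fun q => ?_
  obtain ⟨m, a, b, c⟩ := q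
  by_cases h : mcon (m, a, b, c)
  · simp only [if_pos h]
    obtain ⟨hm, ha, hab, hac⟩ := h
    rw [pf_real m a b c hm ha hab hac]
    exact ofReal_decomp _ _ _ _ _ _ _ (sS_nonneg _) (hks_nonneg _ _ _ _ _) (hks_nonneg _ _ _ _ _)
      (hks_nonneg _ _ _ _ _) (hks_nonneg _ _ _ _ _) (hks_nonneg _ _ _ _ _) (hks_nonneg _ _ _ _ _)
  · simp only [if_neg h, mul_zero, add_zero]


/-! ### Hook reindexings for the shuffle side -/

lemma hook_f1 (s11 s12 s21 s31 : ℕ) :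
    EI mcon (fun q => hks s11 s12 s21 s31 (f1 q)) = EI hcon (hks s11 s12 s21 s31) := by
  refine EI_reindex _ _ _ _ f1 ?_ ?_ ?_ (fun q _ => rfl)
  · intro x y hxy
    obtain ⟨x1, x2, x3, x4⟩ := x; obtain ⟨y1, y2, y3, y4⟩ := y
    simp only [f1, Prod.mk.injEq] at hxy ⊢
    omega
  · intro q
    obtain ⟨m, a, b, c⟩ := q
    simp only [f1, hcon, mcon]
    omega
  · intro y hy
    obtain ⟨y1, y2, y3, y4⟩ := y
    simp only [hcon] at hy
    refine ⟨(y2 - y1, y1, y4, y3 - y2 + y1), ?_⟩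
    simp [f1, Prod.ext_iff]
    omega

lemma hook_f2 (s11 s12 s21 s31 : ℕ) :
    EI mcon (fun q => hks s11 s12 s21 s31 (f2 q)) = EI hcon (hks s11 s12 s21 s31) := by
  refine EI_reindex _ _ _ _ f2 ?_ ?_ ?_ (fun q _ => rfl)
  · intro x y hxy
    obtain ⟨x1, x2, x3, x4⟩ := x; obtain ⟨y1, y2, y3, y4⟩ := y
    simp only [f2, Prod.mk.injEq] at hxy ⊢
    omega
  · intro q
    obtain ⟨m, a, b, c⟩ := q
    simp only [f2, hcon, mcon]
    omega
  · intro y hy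
    obtain ⟨y1, y2, y3, y4⟩ := y
    simp only [hcon] at hy
    refine ⟨(y3 - y2, y1, y4, y2), ?_⟩
    simp [f2, Prod.ext_iff]
    omega

/-! ### The Pieri decomposition -/

lemma pieri : EI mcon fsq = EI acon fsq + EI bcon fsq + EI hcon (hks 2 2 2 2) := by
  have h1 : EI mcon fsq
      = EI (fun q => mcon q ∧ q.2.2.1 ≤ q.1) fsq
        + EI (fun q => mcon q ∧ q.1 < q.2.2.1) fsq :=
    EI_split _ _ _ _ fun q => by simp only [mcon]; omega
  have h2 : EI (fun q => mcon q ∧ q.1 < q.2.2.1) fsq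
      = EI (fun q => mcon q ∧ q.1 < q.2.2.1 ∧ q.2.1 ≤ q.1) fsq
        + EI (fun q => mcon q ∧ q.1 < q.2.1) fsq :=
    EI_split _ _ _ _ fun q => by simp only [mcon]; omega
  have h3 : EI (fun q => mcon q ∧ q.1 < q.2.2.1 ∧ q.2.1 ≤ q.1) fsq
      = EI (fun q => mcon q ∧ q.1 < q.2.2.1 ∧ q.2.1 ≤ q.1 ∧ q.2.2.2 ≤ q.2.2.1) fsq
        + EI (fun q => mcon q ∧ q.1 < q.2.2.1 ∧ q.2.1 ≤ q.1 ∧ q.2.2.1 < q.2.2.2) fsq :=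
    EI_split _ _ _ _ fun q => by simp only [mcon]; omega
  have hA : EI (fun q => mcon q ∧ q.2.2.1 ≤ q.1) fsq = EI acon fsq := by
    refine EI_reindex _ _ _ _ p1 ?_ ?_ ?_ ?_
    · intro x y hxy
      obtain ⟨x1, x2, x3, x4⟩ := x; obtain ⟨y1, y2, y3, y4⟩ := y
      simp only [p1, Prod.mk.injEq] at hxy ⊢
      omega
    · intro q; obtain ⟨m, a, b, c⟩ := q
      simp only [p1, acon, mcon]; omega
    · intro y _; exact ⟨(y.2.2.1, y.1, y.2.1, y.2.2.2), rfl⟩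
    · intro q _; obtain ⟨m, a, b, c⟩ := q; simp only [fsq, p1]; ring
  have hB : EI (fun q => mcon q ∧ q.1 < q.2.2.1 ∧ q.2.1 ≤ q.1 ∧ q.2.2.2 ≤ q.2.2.1) fsq
      = EI bcon fsq := by
    refine EI_reindex _ _ _ _ p2 ?_ ?_ ?_ ?_
    · intro x y hxy
      obtain ⟨x1, x2, x3, x4⟩ := x; obtain ⟨y1, y2, y3, y4⟩ := y
      simp only [p2, Prod.mk.injEq] at hxy ⊢
      omega
    · intro q; obtain ⟨m, a, b, c⟩ := q
      simp only [p2, bcon, mcon]; omega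
    · intro y _; exact ⟨(y.2.1, y.1, y.2.2.2, y.2.2.1), rfl⟩
    · intro q _; obtain ⟨m, a, b, c⟩ := q; simp only [fsq, p2]; ring
  have hH3 : EI (fun q => mcon q ∧ q.1 < q.2.2.1 ∧ q.2.1 ≤ q.1 ∧ q.2.2.1 < q.2.2.2) fsq
      = EI (fun q => hcon q ∧ q.2.2.2 < q.2.1) (hks 2 2 2 2) := by
    refine EI_reindex _ _ _ _ p3 ?_ ?_ ?_ ?_
    · intro x y hxy
      obtain ⟨x1, x2, x3, x4⟩ := x; obtain ⟨y1, y2, y3, y4⟩ := y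
      simp only [p3, Prod.mk.injEq] at hxy ⊢
      omega
    · intro q; obtain ⟨m, a, b, c⟩ := q
      simp only [p3, hcon, mcon]; omega
    · intro y _; exact ⟨(y.2.2.2, y.1, y.2.1, y.2.2.1), rfl⟩
    · intro q _; obtain ⟨m, a, b, c⟩ := q; simp only [fsq, hks, p3]; ring
  have hH4 : EI (fun q => mcon q ∧ q.1 < q.2.1) fsq
      = EI (fun q => hcon q ∧ q.2.1 ≤ q.2.2.2) (hks 2 2 2 2) := by
    refine EI_reindex _ _ _ _ p4 ?_ ?_ ?_ ?_
    · intro x y hxy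
      obtain ⟨x1, x2, x3, x4⟩ := x; obtain ⟨y1, y2, y3, y4⟩ := y
      simp only [p4, Prod.mk.injEq] at hxy ⊢
      omega
    · intro q; obtain ⟨m, a, b, c⟩ := q
      simp only [p4, hcon, mcon]; omega
    · intro y _; exact ⟨(y.1, y.2.1, y.2.2.2, y.2.2.1), rfl⟩
    · intro q _; obtain ⟨m, a, b, c⟩ := q; simp only [fsq, hks, p4]; ring
  have hH : EI hcon (hks 2 2 2 2)
      = EI (fun q => hcon q ∧ q.2.2.2 < q.2.1) (hks 2 2 2 2)
        + EI (fun q => hcon q ∧ q.2.1 ≤ q.2.2.2) (hks 2 2 2 2) :=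
    EI_split _ _ _ _ fun q => by simp only [hcon]; omega
  rw [h1, h2, h3, hA, hB, hH3, hH4, hH]
  ring


/-! ### Summability and finiteness -/

lemma summable_inv_sq : Summable (fun n : ℕ => ((n : ℝ) ^ 2)⁻¹) := by
  simpa [one_div] using (Real.summable_one_div_nat_pow (p := 2)).2 (by norm_num)

set_option maxHeartbeats 1000000 in
lemma summable_sq2 : Summable (fun x : ℕ × ℕ => ((x.1 : ℝ) ^ 2)⁻¹ * ((x.2 : ℝ) ^ 2)⁻¹) :=
  summable_inv_sq.mul_of_nonneg summable_inv_sq (fun n => by positivity)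
    (fun n => by positivity)

set_option maxHeartbeats 1000000 in
lemma summable_sq3 : Summable (fun x : ℕ × ℕ × ℕ =>
    ((x.1 : ℝ) ^ 2)⁻¹ * (((x.2.1 : ℝ) ^ 2)⁻¹ * ((x.2.2 : ℝ) ^ 2)⁻¹)) :=
  summable_inv_sq.mul_of_nonneg summable_sq2 (fun n => by positivity)
    (fun n => by positivity)

set_option maxHeartbeats 1000000 in
lemma summable_sq4 : Summable (fun x : Q =>
    ((x.1 : ℝ) ^ 2)⁻¹ * (((x.2.1 : ℝ) ^ 2)⁻¹ * (((x.2.2.1 : ℝ) ^ 2)⁻¹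
      * ((x.2.2.2 : ℝ) ^ 2)⁻¹))) :=
  summable_inv_sq.mul_of_nonneg summable_sq3 (fun n => by positivity)
    (fun n => by positivity)

lemma summable_fsq : Summable fsq := by
  refine summable_sq4.congr fun q => ?_
  obtain ⟨m, a, b, c⟩ := q
  simp only [fsq, mul_inv]
  ring

lemma fin_master : EI mcon fsq ≠ ⊤ := by
  have hle : EI mcon fsq ≤ ∑' q : Q, ENNReal.ofReal (fsq q) := by
    unfold EI
    refine ENNReal.tsum_le_tsum fun q => ?_
    by_cases h : mcon q
    · rw [if_pos h]
    · rw [if_neg h]; exact zero_le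
  have hne : ∑' q : Q, ENNReal.ofReal (fsq q) ≠ ⊤ := by
    rw [← ENNReal.ofReal_tsum_of_nonneg fsq_nonneg summable_fsq]
    exact ENNReal.ofReal_ne_top
  exact ne_top_of_le_ne_top hne hle

lemma shuffle' :
    EI mcon fsq
      = EI mcon sS + EI hcon (hks 2 2 2 2)
        + 2 * EI hcon (hks 1 2 3 2)
        + 2 * EI hcon (hks 1 2 2 3)
        + 2 * EI hcon (hks 2 2 1 3)
        + EI hcon (hks 2 2 2 2)
        + 2 * EI hcon (hks 2 2 1 3) := by
  rw [shuffle, hook_f1 2 2 2 2, hook_f1 1 2 3 2, hook_f1 1 2 2 3, hook_f1 2 2 1 3,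
    hook_f2 2 2 2 2, hook_f2 2 2 1 3]

lemma fin_EA : EI acon fsq ≠ ⊤ :=
  ne_top_of_le_ne_top fin_master (by rw [pieri]; exact le_trans le_self_add le_self_add)

lemma fin_EB : EI bcon fsq ≠ ⊤ :=
  ne_top_of_le_ne_top fin_master (by rw [pieri]; exact le_trans le_add_self le_self_add)

lemma fin_EH2222 : EI hcon (hks 2 2 2 2) ≠ ⊤ :=
  ne_top_of_le_ne_top fin_master (by rw [pieri]; exact le_add_self)

lemma fin_ES : EI mcon sS ≠ ⊤ :=
  ne_top_of_le_ne_top fin_master (by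
    rw [shuffle']
    exact le_trans le_self_add (le_trans le_self_add (le_trans le_self_add
      (le_trans le_self_add (le_trans le_self_add le_self_add)))))

lemma fin_EH1232 : EI hcon (hks 1 2 3 2) ≠ ⊤ :=
  ne_top_of_le_ne_top fin_master (by
    rw [shuffle']
    refine le_trans (le_mul_of_one_le_left zero_le one_le_two) ?_
    exact le_trans le_add_self (le_trans le_self_add (le_trans le_self_add
      (le_trans le_self_add le_self_add))))

lemma fin_EH1223 : EI hcon (hks 1 2 2 3) ≠ ⊤ :=
  ne_top_of_le_ne_top fin_master (by
    rw [shuffle']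
    refine le_trans (le_mul_of_one_le_left zero_le one_le_two) ?_
    exact le_trans le_add_self (le_trans le_self_add (le_trans le_self_add le_self_add)))

lemma fin_EH2213 : EI hcon (hks 2 2 1 3) ≠ ⊤ :=
  ne_top_of_le_ne_top fin_master (by
    rw [shuffle']
    refine le_trans (le_mul_of_one_le_left zero_le one_le_two) ?_
    exact le_trans le_add_self (le_trans le_self_add le_self_add))

/-! ### Main ENNReal identity -/

lemma mainE :
    EI acon fsq + EI bcon fsq
      = EI mcon sS + EI hcon (hks 2 2 2 2) + 2 * EI hcon (hks 1 2 3 2)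
        + 2 * EI hcon (hks 1 2 2 3) + 4 * EI hcon (hks 2 2 1 3) := by
  refine WithTop.add_right_cancel fin_EH2222 ?_
  have h3 : EI mcon sS + EI hcon (hks 2 2 2 2) + 2 * EI hcon (hks 1 2 3 2)
        + 2 * EI hcon (hks 1 2 2 3) + 2 * EI hcon (hks 2 2 1 3)
        + EI hcon (hks 2 2 2 2) + 2 * EI hcon (hks 2 2 1 3)
      = (EI mcon sS + EI hcon (hks 2 2 2 2) + 2 * EI hcon (hks 1 2 3 2)
        + 2 * EI hcon (hks 1 2 2 3) + 4 * EI hcon (hks 2 2 1 3)) + EI hcon (hks 2 2 2 2) := by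
    ring
  exact pieri.symm.trans (shuffle'.trans h3)

lemma hconv (p : Q → Prop) (f : Q → ℝ) (hf : ∀ q, 0 ≤ f q) :
    ∑' x : {q : Q // p q}, f x.1 = (EI p f).toReal := by
  rw [tsum_eq_toReal (fun x : {q : Q // p q} => f x.1) (fun i => hf i.1)]
  congr 1
  exact tsum_subtype_ite p (fun q => ENNReal.ofReal (f q))

end PieriAux

/-- `ζ_{(2,1,1)}(s₁₁,s₁₂;s₂₁;s₃₁) = Σ_{m₁<m₂<m₃, m₁≤b} 1/(m₁^{s₁₁} b^{s₁₂} m₂^{s₂₁} m₃^{s₃₁})`. -/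
noncomputable def hook211 (s11 s12 s21 s31 : ℕ) : ℝ :=
  ∑' q : {q : ℕ × ℕ × ℕ × ℕ //
      0 < q.1 ∧ q.1 < q.2.1 ∧ q.2.1 < q.2.2.1 ∧ q.1 ≤ q.2.2.2},
    ((q.1.1 : ℝ) ^ s11 * (q.1.2.2.2 : ℝ) ^ s12 * (q.1.2.1 : ℝ) ^ s21 * (q.1.2.2.1 : ℝ) ^ s31)⁻¹

/-- Pieri-type consequence:
`ζ_{(3,1)}(2,2,2;2) + ζ_{(2,2)}(2,2;2,2)` equals the bracketed shifted sums plus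
`ζ_{(2,1,1)}(2,2;2;2) + 2ζ_{(2,1,1)}(1,2;3;2) + 2ζ_{(2,1,1)}(1,2;2;3) + 4ζ_{(2,1,1)}(2,2;1;3)`. -/
theorem pieri_consequence :
    (∑' x : {x : ℕ × ℕ × ℕ × ℕ //
        0 < x.1 ∧ x.1 ≤ x.2.1 ∧ x.2.1 ≤ x.2.2.1 ∧ x.1 < x.2.2.2},
      ((x.1.1 : ℝ) ^ 2 * (x.1.2.1 : ℝ) ^ 2 * (x.1.2.2.1 : ℝ) ^ 2 * (x.1.2.2.2 : ℝ) ^ 2)⁻¹)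
    + (∑' x : {x : ℕ × ℕ × ℕ × ℕ //
        0 < x.1 ∧ x.1 ≤ x.2.1 ∧ x.1 < x.2.2.1 ∧ x.2.2.1 ≤ x.2.2.2 ∧ x.2.1 < x.2.2.2},
      ((x.1.1 : ℝ) ^ 2 * (x.1.2.1 : ℝ) ^ 2 * (x.1.2.2.1 : ℝ) ^ 2 * (x.1.2.2.2 : ℝ) ^ 2)⁻¹) =
    (∑' q : {q : ℕ × ℕ × ℕ × ℕ //
        0 < q.1 ∧ 0 < q.2.1 ∧ q.2.1 ≤ q.2.2.1 ∧ q.2.1 < q.2.2.2},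
      (((q.1.1 : ℝ) ^ 2 * ((q.1.1 + q.1.2.1 : ℕ) : ℝ) ^ 2 * ((q.1.1 + q.1.2.2.2 : ℕ) : ℝ) ^ 2
          * (q.1.2.2.1 : ℝ) ^ 2)⁻¹
        + 2 * ((q.1.1 : ℝ) * ((q.1.1 + q.1.2.1 : ℕ) : ℝ) ^ 3 * ((q.1.1 + q.1.2.2.2 : ℕ) : ℝ) ^ 2
          * (q.1.2.2.1 : ℝ) ^ 2)⁻¹
        + 2 * ((q.1.1 : ℝ) * ((q.1.1 + q.1.2.1 : ℕ) : ℝ) ^ 2 * ((q.1.1 + q.1.2.2.2 : ℕ) : ℝ) ^ 3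
          * (q.1.2.2.1 : ℝ) ^ 2)⁻¹))
    + hook211 2 2 2 2 + 2 * hook211 1 2 3 2 + 2 * hook211 1 2 2 3 + 4 * hook211 2 2 1 3 := by
  classical
  have hA : (∑' x : {x : ℕ × ℕ × ℕ × ℕ //
        0 < x.1 ∧ x.1 ≤ x.2.1 ∧ x.2.1 ≤ x.2.2.1 ∧ x.1 < x.2.2.2},
      ((x.1.1 : ℝ) ^ 2 * (x.1.2.1 : ℝ) ^ 2 * (x.1.2.2.1 : ℝ) ^ 2 * (x.1.2.2.2 : ℝ) ^ 2)⁻¹)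
      = (PieriAux.EI PieriAux.acon PieriAux.fsq).toReal :=
    PieriAux.hconv PieriAux.acon PieriAux.fsq PieriAux.fsq_nonneg
  have hB : (∑' x : {x : ℕ × ℕ × ℕ × ℕ //
        0 < x.1 ∧ x.1 ≤ x.2.1 ∧ x.1 < x.2.2.1 ∧ x.2.2.1 ≤ x.2.2.2 ∧ x.2.1 < x.2.2.2},
      ((x.1.1 : ℝ) ^ 2 * (x.1.2.1 : ℝ) ^ 2 * (x.1.2.2.1 : ℝ) ^ 2 * (x.1.2.2.2 : ℝ) ^ 2)⁻¹)
      = (PieriAux.EI PieriAux.bcon PieriAux.fsq).toReal :=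
    PieriAux.hconv PieriAux.bcon PieriAux.fsq PieriAux.fsq_nonneg
  have hS : (∑' q : {q : ℕ × ℕ × ℕ × ℕ //
        0 < q.1 ∧ 0 < q.2.1 ∧ q.2.1 ≤ q.2.2.1 ∧ q.2.1 < q.2.2.2},
      (((q.1.1 : ℝ) ^ 2 * ((q.1.1 + q.1.2.1 : ℕ) : ℝ) ^ 2 * ((q.1.1 + q.1.2.2.2 : ℕ) : ℝ) ^ 2
          * (q.1.2.2.1 : ℝ) ^ 2)⁻¹
        + 2 * ((q.1.1 : ℝ) * ((q.1.1 + q.1.2.1 : ℕ) : ℝ) ^ 3 * ((q.1.1 + q.1.2.2.2 : ℕ) : ℝ) ^ 2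
          * (q.1.2.2.1 : ℝ) ^ 2)⁻¹
        + 2 * ((q.1.1 : ℝ) * ((q.1.1 + q.1.2.1 : ℕ) : ℝ) ^ 2 * ((q.1.1 + q.1.2.2.2 : ℕ) : ℝ) ^ 3
          * (q.1.2.2.1 : ℝ) ^ 2)⁻¹))
      = (PieriAux.EI PieriAux.mcon PieriAux.sS).toReal :=
    PieriAux.hconv PieriAux.mcon PieriAux.sS PieriAux.sS_nonneg
  have hH1 : hook211 2 2 2 2 = (PieriAux.EI PieriAux.hcon (PieriAux.hks 2 2 2 2)).toReal :=
    PieriAux.hconv PieriAux.hcon (PieriAux.hks 2 2 2 2) (PieriAux.hks_nonneg 2 2 2 2)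
  have hH2 : hook211 1 2 3 2 = (PieriAux.EI PieriAux.hcon (PieriAux.hks 1 2 3 2)).toReal :=
    PieriAux.hconv PieriAux.hcon (PieriAux.hks 1 2 3 2) (PieriAux.hks_nonneg 1 2 3 2)
  have hH3 : hook211 1 2 2 3 = (PieriAux.EI PieriAux.hcon (PieriAux.hks 1 2 2 3)).toReal :=
    PieriAux.hconv PieriAux.hcon (PieriAux.hks 1 2 2 3) (PieriAux.hks_nonneg 1 2 2 3)
  have hH4 : hook211 2 2 1 3 = (PieriAux.EI PieriAux.hcon (PieriAux.hks 2 2 1 3)).toReal :=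
    PieriAux.hconv PieriAux.hcon (PieriAux.hks 2 2 1 3) (PieriAux.hks_nonneg 2 2 1 3)
  rw [hA, hB, hS, hH1, hH2, hH3, hH4]
  have e2 : ∀ x : ℝ≥0∞, 2 * x.toReal = ((2 : ℝ≥0∞) * x).toReal := fun x => by
    rw [ENNReal.toReal_mul]; norm_num
  have e4 : ∀ x : ℝ≥0∞, 4 * x.toReal = ((4 : ℝ≥0∞) * x).toReal := fun x => by
    rw [ENNReal.toReal_mul]; norm_num
  rw [e2, e2, e4]
  have f2' : (2 : ℝ≥0∞) ≠ ⊤ := by norm_num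
  have f4' : (4 : ℝ≥0∞) ≠ ⊤ := by norm_num
  rw [← ENNReal.toReal_add PieriAux.fin_EA PieriAux.fin_EB,
      ← ENNReal.toReal_add PieriAux.fin_ES PieriAux.fin_EH2222,
      ← ENNReal.toReal_add (ENNReal.add_ne_top.2 ⟨PieriAux.fin_ES, PieriAux.fin_EH2222⟩)
        (ENNReal.mul_ne_top f2' PieriAux.fin_EH1232),
      ← ENNReal.toReal_add
        (ENNReal.add_ne_top.2 ⟨ENNReal.add_ne_top.2 ⟨PieriAux.fin_ES, PieriAux.fin_EH2222⟩,
          ENNReal.mul_ne_top f2' PieriAux.fin_EH1232⟩)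
        (ENNReal.mul_ne_top f2' PieriAux.fin_EH1223),
      ← ENNReal.toReal_add
        (ENNReal.add_ne_top.2 ⟨ENNReal.add_ne_top.2
          ⟨ENNReal.add_ne_top.2 ⟨PieriAux.fin_ES, PieriAux.fin_EH2222⟩,
            ENNReal.mul_ne_top f2' PieriAux.fin_EH1232⟩,
          ENNReal.mul_ne_top f2' PieriAux.fin_EH1223⟩)
        (ENNReal.mul_ne_top f4' PieriAux.fin_EH2213)]
  exact congrArg ENNReal.toReal PieriAux.mainE
end

section
/- Harmonic-type product identity for elementary factorial values: ζ_{(r,1),1}((1,𝐤;2),(2)) · ζ(2) = ζ_{(r,1),2}((1,𝐤;2),(2,2)) + ζ_{(r,1),1}((1,𝐤;2),(4)) + Σ over m₁ < m₂ and hook fillings a ≤ b₂ ≤ ⋯ ≤ b_r, a < c of (∏_{j=2}^r b_j^{-k_j}) / (m₁² m₂² (m₁+a)(m₁+c)²), where ζ_{(r,1),s}((1,𝐤;2),t) = Σ over chains m₁ < ⋯ < m_s and hook fillings of ∏ m_i^{-t_i} · (m_s+a)^{-1} (m_s+c)^{-2} ∏ b_j^{-k_j}. -/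
/-- Product `∏_j b_j^{-k_j}` over the row entries `b₂ ≤ ⋯ ≤ b_r`. -/
noncomputable def rowProd {n : ℕ} (k : Fin n → ℕ) (b : Fin n → ℕ) : ℝ :=
  (∏ j, ((b j : ℝ)) ^ (k j))⁻¹

/-- Elementary factorial value of hook `(r,1)` with chain length 1:
`ζ_{(r,1),1}((u,𝐤;v),(t)) = Σ_{m ≥ 1, a ≤ b, a < c} m^{-t}(m+a)^{-u}(m+c)^{-v} ∏ b_j^{-k_j}`. -/
noncomputable def ef1 {n : ℕ} (k : Fin n → ℕ) (u v t : ℕ) : ℝ :=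
  ∑' x : {x : (ℕ × ℕ × ℕ) × (Fin n → ℕ) //
      0 < x.1.1 ∧ 0 < x.1.2.1 ∧ x.1.2.1 < x.1.2.2 ∧ Monotone x.2 ∧ ∀ j, x.1.2.1 ≤ x.2 j},
    ((x.1.1.1 : ℝ) ^ t * ((x.1.1.1 + x.1.1.2.1 : ℕ) : ℝ) ^ u
        * ((x.1.1.1 + x.1.1.2.2 : ℕ) : ℝ) ^ v)⁻¹ * rowProd k x.1.2

/-- Elementary factorial value with chain length 2:
`ζ_{(r,1),2}((u,𝐤;v),(t₁,t₂)) = Σ_{m₁<m₂, fillings} m₁^{-t₁} m₂^{-t₂} (m₂+a)^{-u}(m₂+c)^{-v} ∏ b^{-k}`. -/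
noncomputable def ef2 {n : ℕ} (k : Fin n → ℕ) (u v t₁ t₂ : ℕ) : ℝ :=
  ∑' x : {x : (ℕ × ℕ × ℕ × ℕ) × (Fin n → ℕ) //
      0 < x.1.1 ∧ x.1.1 < x.1.2.1 ∧ 0 < x.1.2.2.1 ∧ x.1.2.2.1 < x.1.2.2.2
        ∧ Monotone x.2 ∧ ∀ j, x.1.2.2.1 ≤ x.2 j},
    ((x.1.1.1 : ℝ) ^ t₁ * (x.1.1.2.1 : ℝ) ^ t₂ * ((x.1.1.2.1 + x.1.1.2.2.1 : ℕ) : ℝ) ^ u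
        * ((x.1.1.2.1 + x.1.1.2.2.2 : ℕ) : ℝ) ^ v)⁻¹ * rowProd k x.1.2

/-! The two factors are series of nonnegative terms, so once the first one converges absolutely
the product is a single series over pairs (filling with chain index `m₀`, new index `m`), and
it splits according to `m < m₀`, `m = m₀` or `m₀ < m`: the first piece is the chain-length-two
value, the diagonal raises the exponent of `m₀` to `4`, and in the last piece the shift stays on
the smaller index `m₀`.

Absolute convergence: by `(m + a)⁻¹ (m + c)⁻² ≤ a⁻¹ c⁻²` the first factor is dominated by `ζ(2)²`
times the sum of `a⁻¹ ∏ b_j^{-k_j}` over the chains `1 ≤ a ≤ b₂ ≤ ⋯ ≤ b_r`, and a chain sum with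
exponents `≥ 1`, the last one `≥ 2`, is at most `2^(length) / (lower bound)`: peel off the first
entry and use `Σ_{x ≥ a} x⁻² ≤ 2 / a`. -/

open scoped ENNReal
open Finset

theorem Summable.tsum_eq_tsum_lt_add_tsum_eq_add_tsum_gt {ι γ E : Type*} [AddCommGroup E]
    [UniformSpace E] [IsUniformAddGroup E] [CompleteSpace E] [T2Space E] [LinearOrder γ]
    {f : ι → E} (hf : Summable f) (u v : ι → γ) :
    ∑' i, f i = ∑' i : {i | u i < v i}, f i + ∑' i : {i | u i = v i}, f i
      + ∑' i : {i | v i < u i}, f i := by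
  have hcover : ({i | u i < v i} ∪ {i | u i = v i}) ∪ {i | v i < u i} = Set.univ :=
    Set.eq_univ_of_forall fun i => by simpa [or_assoc] using lt_trichotomy (u i) (v i)
  rw [← tsum_univ, ← hcover, Summable.tsum_union_disjoint ?_ (hf.subtype _) (hf.subtype _),
    Summable.tsum_union_disjoint ?_ (hf.subtype _) (hf.subtype _)]
  · exact Set.disjoint_left.2 fun i h₁ h₂ => (ne_of_lt h₁) h₂
  · exact Set.disjoint_left.2 fun i h₁ h₂ => by
      rcases h₁ with h₁ | h₁
      · exact lt_asymm h₁ h₂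
      · exact (ne_of_lt h₂) h₁.symm

lemma ENNReal.inv_natCast_pow_eq_ofReal {x : ℕ} (hx : 0 < x) (p : ℕ) :
    ((x : ℝ≥0∞) ^ p)⁻¹ = ENNReal.ofReal ((x : ℝ) ^ p)⁻¹ := by
  rw [ENNReal.ofReal_inv_of_pos (by positivity), ENNReal.ofReal_pow (by positivity),
    ENNReal.ofReal_natCast]

lemma ENNReal.tsum_inv_sq_tail_le {a : ℕ} (ha : 1 ≤ a) :
    ∑' x : ℕ, (if a ≤ x then ((x : ℝ≥0∞) ^ 2)⁻¹ else 0) ≤ 2 / a := by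
  refine ENNReal.tsum_le_of_sum_range_le fun N => ?_
  calc ∑ x ∈ range N, (if a ≤ x then ((x : ℝ≥0∞) ^ 2)⁻¹ else 0)
      = ∑ x ∈ Ioo (a - 1) N, ((x : ℝ≥0∞) ^ 2)⁻¹ := by
        rw [sum_ite, sum_const_zero, add_zero]
        congr 1
        ext x
        simp only [mem_filter, mem_range, mem_Ioo]
        omega
    _ = ENNReal.ofReal (∑ x ∈ Ioo (a - 1) N, ((x : ℝ) ^ 2)⁻¹) := by
        rw [ENNReal.ofReal_sum_of_nonneg fun _ _ => by positivity]
        exact sum_congr rfl fun x hx => ENNReal.inv_natCast_pow_eq_ofReal (by simp at hx; omega) 2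
    _ ≤ ENNReal.ofReal (2 / ((a - 1 : ℕ) + 1)) := ENNReal.ofReal_le_ofReal (sum_Ioo_inv_sq_le _ _)
    _ = 2 / a := by
        rw [Nat.cast_sub ha, Nat.cast_one, sub_add_cancel,
          ENNReal.ofReal_div_of_pos (by positivity)]
        simp

section Chains

variable {n : ℕ}

noncomputable def chainWeight (k : Fin n → ℕ) (a : ℕ) (b : Fin n → ℕ) : ℝ≥0∞ :=
  if Monotone (Fin.cons a b : Fin (n + 1) → ℕ) then ∏ j, ((b j : ℝ≥0∞) ^ k j)⁻¹ else 0

lemma chainWeight_cons (k : Fin (n + 1) → ℕ) (a x : ℕ) (t : Fin n → ℕ) :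
    chainWeight k a (Fin.cons x t) =
      if a ≤ x then ((x : ℝ≥0∞) ^ k 0)⁻¹ * chainWeight (Fin.tail k) x t else 0 := by
  have hmono : Monotone (Fin.cons a (Fin.cons x t : Fin (n + 1) → ℕ) : Fin (n + 2) → ℕ) ↔
      a ≤ x ∧ Monotone (Fin.cons x t : Fin (n + 1) → ℕ) := monotone_vecCons
  unfold chainWeight
  by_cases h : a ≤ x <;> by_cases h' : Monotone (Fin.cons x t : Fin (n + 1) → ℕ) <;>
    simp [hmono, h, h', Fin.prod_univ_succ, Fin.tail]

lemma tsum_chainWeight_succ (k : Fin (n + 1) → ℕ) (a : ℕ) :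
    ∑' b, chainWeight k a b = ∑' x : ℕ,
      if a ≤ x then ((x : ℝ≥0∞) ^ k 0)⁻¹ * ∑' t, chainWeight (Fin.tail k) x t else 0 := by
  rw [← (Fin.consEquiv fun _ => ℕ).tsum_eq, ENNReal.tsum_prod']
  refine tsum_congr fun x => ?_
  simp only [Fin.consEquiv, Equiv.coe_fn_mk, chainWeight_cons]
  split_ifs <;> simp [ENNReal.tsum_mul_left]

lemma tsum_chainWeight_zero (k : Fin 0 → ℕ) (a : ℕ) : ∑' b, chainWeight k a b = 1 := by
  simp [tsum_fintype, chainWeight, Subsingleton.monotone]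

theorem tsum_chainWeight_le (k : Fin (n + 1) → ℕ) (hk : ∀ j, 1 ≤ k j)
    (hlast : 2 ≤ k (Fin.last n)) {a : ℕ} (ha : 1 ≤ a) :
    ∑' b, chainWeight k a b ≤ 2 ^ (n + 1) / a := by
  induction n generalizing a with
  | zero =>
    rw [tsum_chainWeight_succ]
    calc _ ≤ ∑' x : ℕ, (if a ≤ x then ((x : ℝ≥0∞) ^ 2)⁻¹ else 0) := by
          refine ENNReal.tsum_le_tsum fun x => ?_
          split_ifs with hx
          · rw [tsum_chainWeight_zero, mul_one]
            gcongr
            · exact_mod_cast ha.trans hx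
            · exact hlast
          · exact le_rfl
      _ ≤ 2 / a := ENNReal.tsum_inv_sq_tail_le ha
      _ = 2 ^ (0 + 1) / a := by norm_num
  | succ n ih =>
    rw [tsum_chainWeight_succ]
    calc _ ≤ ∑' x : ℕ, 2 ^ (n + 1) * (if a ≤ x then ((x : ℝ≥0∞) ^ 2)⁻¹ else 0) := by
          refine ENNReal.tsum_le_tsum fun x => ?_
          split_ifs with hx
          · have htail := ih (Fin.tail k) (fun j => hk _) (by simpa [Fin.tail] using hlast)
              (ha.trans hx)
            calc ((x : ℝ≥0∞) ^ k 0)⁻¹ * ∑' t, chainWeight (Fin.tail k) x t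
                ≤ ((x : ℝ≥0∞) ^ 1)⁻¹ * (2 ^ (n + 1) / x) := by
                  gcongr
                  · exact_mod_cast ha.trans hx
                  · exact hk 0
              _ = 2 ^ (n + 1) * ((x : ℝ≥0∞) ^ 2)⁻¹ := by
                simp only [div_eq_mul_inv, ENNReal.inv_pow]; ring
          · simp
      _ = 2 ^ (n + 1) * ∑' x : ℕ, (if a ≤ x then ((x : ℝ≥0∞) ^ 2)⁻¹ else 0) :=
          ENNReal.tsum_mul_left
      _ ≤ 2 ^ (n + 1) * (2 / a) := by gcongr; exact ENNReal.tsum_inv_sq_tail_le ha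
      _ = 2 ^ (n + 1 + 1) / a := by rw [← mul_div_assoc, ← pow_succ]

end Chains

section HookSums

variable {n : ℕ}

abbrev EF1Index (n : ℕ) := {x : (ℕ × ℕ × ℕ) × (Fin n → ℕ) //
  0 < x.1.1 ∧ 0 < x.1.2.1 ∧ x.1.2.1 < x.1.2.2 ∧ Monotone x.2 ∧ ∀ j, x.1.2.1 ≤ x.2 j}

abbrev EF2Index (n : ℕ) := {x : (ℕ × ℕ × ℕ × ℕ) × (Fin n → ℕ) //
  0 < x.1.1 ∧ x.1.1 < x.1.2.1 ∧ 0 < x.1.2.2.1 ∧ x.1.2.2.1 < x.1.2.2.2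
    ∧ Monotone x.2 ∧ ∀ j, x.1.2.2.1 ≤ x.2 j}

noncomputable def ef1Term (k : Fin n → ℕ) (u v t : ℕ) (x : (ℕ × ℕ × ℕ) × (Fin n → ℕ)) : ℝ :=
  ((x.1.1 : ℝ) ^ t * ((x.1.1 + x.1.2.1 : ℕ) : ℝ) ^ u * ((x.1.1 + x.1.2.2 : ℕ) : ℝ) ^ v)⁻¹
    * rowProd k x.2

lemma ef1_eq_tsum_ef1Term (k : Fin n → ℕ) (u v t : ℕ) :
    ef1 k u v t = ∑' x : EF1Index n, ef1Term k u v t x.1 := rfl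

lemma ef1Term_nonneg (k : Fin n → ℕ) (u v t : ℕ) (x : (ℕ × ℕ × ℕ) × (Fin n → ℕ)) :
    0 ≤ ef1Term k u v t x := by
  unfold ef1Term rowProd; positivity

lemma ef1Term_le_chainWeight (k : Fin (n + 1) → ℕ) {u v t : ℕ} (hu : 1 ≤ u) (hv : 2 ≤ v)
    (ht : 2 ≤ t) (x : EF1Index (n + 1)) :
    ef1Term k u v t x.1 ≤ ((x.1.1.1 : ℝ) ^ 2)⁻¹ * ((x.1.1.2.2 : ℝ) ^ 2)⁻¹
      * (chainWeight (Fin.cons 1 k) 1 (Fin.cons x.1.1.2.1 x.1.2)).toReal := by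
  obtain ⟨⟨⟨m, a, c⟩, b⟩, hm, ha, hac, hb, hab⟩ := x
  have hweight : chainWeight (Fin.cons 1 k) 1 (Fin.cons a b) =
      ((a : ℝ≥0∞) ^ 1)⁻¹ * ∏ j, ((b j : ℝ≥0∞) ^ k j)⁻¹ := by
    rw [chainWeight_cons, if_pos (show 1 ≤ a from ha), Fin.cons_zero, Fin.tail_cons, chainWeight,
      if_pos (show Monotone (Fin.cons a b : Fin (n + 2) → ℕ) from hb.vecCons (hab 0))]
  simp only [hweight, ef1Term, rowProd, ENNReal.toReal_mul, ENNReal.toReal_prod,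
    ENNReal.toReal_inv, ENNReal.toReal_pow, ENNReal.toReal_natCast]
  rw [Finset.prod_inv_distrib, mul_inv, mul_inv]
  push_cast
  have hm1 : (1 : ℝ) ≤ m := by exact_mod_cast hm
  have ha1 : (1 : ℝ) ≤ a := by exact_mod_cast ha
  have hc1 : (1 : ℝ) ≤ c := by exact_mod_cast ha.trans hac
  have hmt : ((m : ℝ) ^ t)⁻¹ ≤ ((m : ℝ) ^ 2)⁻¹ := by gcongr
  have hau : (((m : ℝ) + a) ^ u)⁻¹ ≤ ((a : ℝ) ^ 1)⁻¹ :=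
    inv_anti₀ (by positivity) ((pow_le_pow_right₀ ha1 hu).trans (by gcongr; linarith))
  have hcv : (((m : ℝ) + c) ^ v)⁻¹ ≤ ((c : ℝ) ^ 2)⁻¹ :=
    inv_anti₀ (by positivity) ((pow_le_pow_right₀ hc1 hv).trans (by gcongr; linarith))
  calc _ ≤ ((m : ℝ) ^ 2)⁻¹ * ((a : ℝ) ^ 1)⁻¹ * ((c : ℝ) ^ 2)⁻¹ * (∏ j, ((b j : ℝ) ^ k j))⁻¹ := by
        gcongr
    _ = _ := by ring

theorem summable_ef1Term {k : Fin (n + 1) → ℕ} (hk : ∀ j, 1 ≤ k j) (hlast : 2 ≤ k (Fin.last n))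
    {u v t : ℕ} (hu : 1 ≤ u) (hv : 2 ≤ v) (ht : 2 ≤ t) :
    Summable fun x : EF1Index (n + 1) => ef1Term k u v t x.1 := by
  have hchain : ∑' b, chainWeight (Fin.cons 1 k : Fin (n + 2) → ℕ) 1 b ≠ ⊤ :=
    ne_top_of_le_ne_top (by simp)
      (tsum_chainWeight_le _ (Fin.cases le_rfl hk) (by simpa using hlast) le_rfl)
  have hζ : Summable fun m : ℕ => ((m : ℝ) ^ 2)⁻¹ := Real.summable_nat_pow_inv.2 one_lt_two
  have hζζ := hζ.mul_of_nonneg hζ (fun _ => by positivity) (fun _ => by positivity)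
  have hbound := hζζ.mul_of_nonneg (ENNReal.summable_toReal hchain) (fun _ => by positivity)
    (fun _ => ENNReal.toReal_nonneg)
  have hinj : Function.Injective fun x : EF1Index (n + 1) =>
      ((x.1.1.1, x.1.1.2.2), (Fin.cons x.1.1.2.1 x.1.2 : Fin (n + 2) → ℕ)) := by
    rintro ⟨⟨⟨m, a, c⟩, b⟩, _⟩ ⟨⟨⟨m', a', c'⟩, b'⟩, _⟩ h
    simp only [Prod.mk.injEq, Fin.cons_inj] at h
    obtain ⟨⟨rfl, rfl⟩, rfl, rfl⟩ := h
    rfl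
  refine Summable.of_nonneg_of_le (fun x => ef1Term_nonneg _ _ _ _ _) (fun x => ?_)
    (hbound.comp_injective hinj)
  exact ef1Term_le_chainWeight k hu hv ht x

def ef2IndexEquivLt : EF2Index n ≃ {p : EF1Index n × {m : ℕ // 0 < m} | p.2.1 < p.1.1.1.1} where
  toFun := fun ⟨((m₁, m₂, a, c), b), h₁, h₁₂, ha, hac, hb, hab⟩ =>
    ⟨(⟨((m₂, a, c), b), h₁.trans h₁₂, ha, hac, hb, hab⟩, ⟨m₁, h₁⟩), h₁₂⟩
  invFun := fun ⟨(⟨((m₂, a, c), b), _, ha, hac, hb, hab⟩, ⟨m₁, h₁⟩), h₁₂⟩ =>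
    ⟨((m₁, m₂, a, c), b), h₁, h₁₂, ha, hac, hb, hab⟩
  left_inv := by rintro ⟨⟨⟨_, _, _, _⟩, _⟩, _, _, _, _, _, _⟩; rfl
  right_inv := by rintro ⟨⟨⟨⟨⟨_, _, _⟩, _⟩, _, _, _, _, _⟩, ⟨_, _⟩⟩, _⟩; rfl

def ef1IndexEquivEq : EF1Index n ≃ {p : EF1Index n × {m : ℕ // 0 < m} | p.2.1 = p.1.1.1.1} where
  toFun x := ⟨(x, ⟨x.1.1.1, x.2.1⟩), rfl⟩
  invFun p := p.1.1
  left_inv _ := rfl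
  right_inv p := Subtype.ext (Prod.ext rfl (Subtype.ext p.2.symm))

def ef2IndexEquivGt : EF2Index n ≃ {p : EF1Index n × {m : ℕ // 0 < m} | p.1.1.1.1 < p.2.1} where
  toFun := fun ⟨((m₁, m₂, a, c), b), h₁, h₁₂, ha, hac, hb, hab⟩ =>
    ⟨(⟨((m₁, a, c), b), h₁, ha, hac, hb, hab⟩, ⟨m₂, h₁.trans h₁₂⟩), h₁₂⟩
  invFun := fun ⟨(⟨((m₁, a, c), b), h₁, ha, hac, hb, hab⟩, ⟨m₂, _⟩), h₁₂⟩ =>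
    ⟨((m₁, m₂, a, c), b), h₁, h₁₂, ha, hac, hb, hab⟩
  left_inv := by rintro ⟨⟨⟨_, _, _, _⟩, _⟩, _, _, _, _, _, _⟩; rfl
  right_inv := by rintro ⟨⟨⟨⟨⟨_, _, _⟩, _⟩, _, _, _, _, _⟩, ⟨_, _⟩⟩, _⟩; rfl

variable (k : Fin n → ℕ)

lemma tsum_ef1Term_mul_lt_eq_ef2 :
    ∑' p : {p : EF1Index n × {m : ℕ // 0 < m} | p.2.1 < p.1.1.1.1},
      ef1Term k 1 2 2 p.1.1.1 * ((p.1.2.1 : ℝ) ^ 2)⁻¹ = ef2 k 1 2 2 2 := by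
  rw [ef2, ← ef2IndexEquivLt.tsum_eq]
  refine tsum_congr ?_
  rintro ⟨⟨⟨m₁, m₂, a, c⟩, b⟩, _, _, _, _, _, _⟩
  simp only [ef2IndexEquivLt, Equiv.coe_fn_mk, ef1Term]
  ring

lemma tsum_ef1Term_mul_eq_eq_ef1 :
    ∑' p : {p : EF1Index n × {m : ℕ // 0 < m} | p.2.1 = p.1.1.1.1},
      ef1Term k 1 2 2 p.1.1.1 * ((p.1.2.1 : ℝ) ^ 2)⁻¹ = ef1 k 1 2 4 := by
  rw [ef1_eq_tsum_ef1Term, ← ef1IndexEquivEq.tsum_eq]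
  refine tsum_congr fun x => ?_
  simp only [ef1IndexEquivEq, Equiv.coe_fn_mk, ef1Term]
  ring

lemma tsum_ef1Term_mul_gt_eq :
    ∑' p : {p : EF1Index n × {m : ℕ // 0 < m} | p.1.1.1.1 < p.2.1},
      ef1Term k 1 2 2 p.1.1.1 * ((p.1.2.1 : ℝ) ^ 2)⁻¹ =
    ∑' x : EF2Index n,
      ((x.1.1.1 : ℝ) ^ 2 * (x.1.1.2.1 : ℝ) ^ 2 * ((x.1.1.1 + x.1.1.2.2.1 : ℕ) : ℝ)
        * ((x.1.1.1 + x.1.1.2.2.2 : ℕ) : ℝ) ^ 2)⁻¹ * rowProd k x.1.2 := by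
  rw [← ef2IndexEquivGt.tsum_eq]
  refine tsum_congr ?_
  rintro ⟨⟨⟨m₁, m₂, a, c⟩, b⟩, _, _, _, _, _, _⟩
  simp only [ef2IndexEquivGt, Equiv.coe_fn_mk, ef1Term]
  ring

end HookSums

/-- Harmonic-type product identity for elementary factorial values:
`ζ_{(r,1),1}((1,𝐤;2),(2))·ζ(2) = ζ_{(r,1),2}((1,𝐤;2),(2,2)) + ζ_{(r,1),1}((1,𝐤;2),(4))`
`+ Σ_{m₁<m₂, fillings} (∏ b^{-k}) / (m₁² m₂² (m₁+a)(m₁+c)²)`. -/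
theorem harmonic_product_ef (n : ℕ) (hn : 1 ≤ n) (k : Fin n → ℕ)
    (hk : ∀ j, 1 ≤ k j) (hlast : 2 ≤ k ⟨n - 1, by omega⟩) :
    ef1 k 1 2 2 * (∑' m : {m : ℕ // 0 < m}, (((m : ℕ) : ℝ) ^ 2)⁻¹) =
      ef2 k 1 2 2 2 + ef1 k 1 2 4
        + ∑' x : {x : (ℕ × ℕ × ℕ × ℕ) × (Fin n → ℕ) //
            0 < x.1.1 ∧ x.1.1 < x.1.2.1 ∧ 0 < x.1.2.2.1 ∧ x.1.2.2.1 < x.1.2.2.2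
              ∧ Monotone x.2 ∧ ∀ j, x.1.2.2.1 ≤ x.2 j},
          ((x.1.1.1 : ℝ) ^ 2 * (x.1.1.2.1 : ℝ) ^ 2 * ((x.1.1.1 + x.1.1.2.2.1 : ℕ) : ℝ)
              * ((x.1.1.1 + x.1.1.2.2.2 : ℕ) : ℝ) ^ 2)⁻¹ * rowProd k x.1.2 := by
  obtain ⟨n, rfl⟩ : ∃ m, n = m + 1 := ⟨n - 1, by omega⟩
  have hA : Summable fun x : EF1Index (n + 1) => ef1Term k 1 2 2 x.1 :=
    summable_ef1Term hk hlast le_rfl le_rfl le_rfl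
  have hζ : Summable fun m : {m : ℕ // 0 < m} => ((m : ℝ) ^ 2)⁻¹ :=
    (Real.summable_nat_pow_inv.2 one_lt_two).subtype _
  have hprod := hA.mul_of_nonneg hζ (fun x => ef1Term_nonneg _ _ _ _ _) (fun _ => by positivity)
  rw [ef1_eq_tsum_ef1Term, hA.tsum_mul_tsum hζ hprod,
    hprod.tsum_eq_tsum_lt_add_tsum_eq_add_tsum_gt (fun p => p.2.1) (fun p => p.1.1.1.1),
    tsum_ef1Term_mul_lt_eq_ef2, tsum_ef1Term_mul_eq_eq_ef1, tsum_ef1Term_mul_gt_eq]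
end

section
/- For the convergent case, with all summation variables ranging over positive integers: Σ_{a<c} 1/(a² c²) · Σ_{m ≥ 1} 1/m² = Σ_{m ≥ 1, a<c} [1/(m²(m+a)²(m+c)²) + 2/(m(m+a)³(m+c)²) + 2/(m(m+a)²(m+c)³)] + 2Σ_{m<a<c} 1/(m² a² c²) + 2Σ_{m<a<c} 1/(m a³ c²) + 2Σ_{m<a<c} 1/(m a² c³) + 4Σ_{m<a<c} 1/(m² a c³). -/
/-- Riemann zeta value `ζ(s) = Σ_{n ≥ 1} n⁻ˢ`. -/
noncomputable def zetaVal (s : ℕ) : ℝ :=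
  ∑' n : {n : ℕ // 0 < n}, (((n : ℕ) : ℝ) ^ s)⁻¹

open scoped ENNReal

namespace ShuffleAux

abbrev T3 : Type := {q : ℕ × ℕ × ℕ // 0 < q.1 ∧ 0 < q.2.1 ∧ q.2.1 < q.2.2}
abbrev S3 : Type := {q : ℕ × ℕ × ℕ // 0 < q.1 ∧ q.1 < q.2.1 ∧ q.2.1 < q.2.2}
abbrev P2 : Type := {p : ℕ × ℕ // 0 < p.1 ∧ p.1 < p.2}
abbrev N1 : Type := {n : ℕ // 0 < n}

/-- `(m,a,c) ↦ (m, m+a, m+c)`. -/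
def eA : T3 ≃ S3 where
  toFun t := ⟨(t.1.1, t.1.1 + t.1.2.1, t.1.1 + t.1.2.2), by
    obtain ⟨⟨m, a, c⟩, h⟩ := t; dsimp only at h
    show 0 < m ∧ m < m + a ∧ m + a < m + c; omega⟩
  invFun s := ⟨(s.1.1, s.1.2.1 - s.1.1, s.1.2.2 - s.1.1), by
    obtain ⟨⟨x, y, z⟩, h⟩ := s; dsimp only at h
    show 0 < x ∧ 0 < y - x ∧ y - x < z - x; omega⟩
  left_inv t := by
    obtain ⟨⟨m, a, c⟩, h⟩ := t; dsimp only at h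
    apply Subtype.ext
    show (m, m + a - m, m + c - m) = (m, a, c)
    simp only [Prod.mk.injEq, true_and]; omega
  right_inv s := by
    obtain ⟨⟨x, y, z⟩, h⟩ := s; dsimp only at h
    apply Subtype.ext
    show (x, x + (y - x), x + (z - x)) = (x, y, z)
    simp only [Prod.mk.injEq, true_and]; omega

/-- `(m,a,c) ↦ (a, m+a, m+c)`. -/
def eB : T3 ≃ S3 where
  toFun t := ⟨(t.1.2.1, t.1.1 + t.1.2.1, t.1.1 + t.1.2.2), by
    obtain ⟨⟨m, a, c⟩, h⟩ := t; dsimp only at h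
    show 0 < a ∧ a < m + a ∧ m + a < m + c; omega⟩
  invFun s := ⟨(s.1.2.1 - s.1.1, s.1.1, s.1.2.2 - s.1.2.1 + s.1.1), by
    obtain ⟨⟨x, y, z⟩, h⟩ := s; dsimp only at h
    show 0 < y - x ∧ 0 < x ∧ x < z - y + x; omega⟩
  left_inv t := by
    obtain ⟨⟨m, a, c⟩, h⟩ := t; dsimp only at h
    apply Subtype.ext
    show (m + a - a, a, m + c - (m + a) + a) = (m, a, c)
    simp only [Prod.mk.injEq, true_and, and_true]; omega
  right_inv s := by
    obtain ⟨⟨x, y, z⟩, h⟩ := s; dsimp only at h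
    apply Subtype.ext
    show (x, y - x + x, y - x + (z - y + x)) = (x, y, z)
    simp only [Prod.mk.injEq, true_and]; omega

/-- `(m,a,c) ↦ (a, c, m+c)`. -/
def eC : T3 ≃ S3 where
  toFun t := ⟨(t.1.2.1, t.1.2.2, t.1.1 + t.1.2.2), by
    obtain ⟨⟨m, a, c⟩, h⟩ := t; dsimp only at h
    show 0 < a ∧ a < c ∧ c < m + c; omega⟩
  invFun s := ⟨(s.1.2.2 - s.1.2.1, s.1.1, s.1.2.1), by
    obtain ⟨⟨x, y, z⟩, h⟩ := s; dsimp only at h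
    show 0 < z - y ∧ 0 < x ∧ x < y; omega⟩
  left_inv t := by
    obtain ⟨⟨m, a, c⟩, h⟩ := t; dsimp only at h
    apply Subtype.ext
    show (m + c - c, a, c) = (m, a, c)
    simp only [Prod.mk.injEq, true_and, and_true]; omega
  right_inv s := by
    obtain ⟨⟨x, y, z⟩, h⟩ := s; dsimp only at h
    apply Subtype.ext
    show (x, y, z - y + y) = (x, y, z)
    simp only [Prod.mk.injEq, true_and]; omega

/-- `((a,c), m) ↦ (m, a, c)`. -/
def eP : P2 × N1 ≃ T3 where
  toFun x := ⟨(x.2.1, x.1.1.1, x.1.1.2), by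
    obtain ⟨⟨⟨a, c⟩, h1⟩, ⟨m, h2⟩⟩ := x; simp only at h1 h2 ⊢; exact ⟨h2, h1⟩⟩
  invFun t := ⟨⟨(t.1.2.1, t.1.2.2), ⟨t.2.2.1, t.2.2.2⟩⟩, ⟨t.1.1, t.2.1⟩⟩
  left_inv x := rfl
  right_inv t := rfl

/-- The partial-fraction building block. -/
lemma key (m a c : ℕ) (hm : 0 < m) (ha : 0 < a) (hac : a < c) :
    ((a : ℝ) ^ 2 * (c : ℝ) ^ 2)⁻¹ * ((m : ℝ) ^ 2)⁻¹ =
      (((m : ℝ) ^ 2 * ((m + a : ℕ) : ℝ) ^ 2 * ((m + c : ℕ) : ℝ) ^ 2)⁻¹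
        + 2 * ((m : ℝ) * ((m + a : ℕ) : ℝ) ^ 3 * ((m + c : ℕ) : ℝ) ^ 2)⁻¹
        + 2 * ((m : ℝ) * ((m + a : ℕ) : ℝ) ^ 2 * ((m + c : ℕ) : ℝ) ^ 3)⁻¹)
      + (((a : ℝ) ^ 2 * ((m + a : ℕ) : ℝ) ^ 2 * ((m + c : ℕ) : ℝ) ^ 2)⁻¹
        + 2 * ((a : ℝ) * ((m + a : ℕ) : ℝ) ^ 3 * ((m + c : ℕ) : ℝ) ^ 2)⁻¹
        + 2 * ((a : ℝ) * ((m + a : ℕ) : ℝ) ^ 2 * ((m + c : ℕ) : ℝ) ^ 3)⁻¹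
        + 2 * ((a : ℝ) ^ 2 * ((m + a : ℕ) : ℝ) * ((m + c : ℕ) : ℝ) ^ 3)⁻¹)
      + (((a : ℝ) ^ 2 * (c : ℝ) ^ 2 * ((m + c : ℕ) : ℝ) ^ 2)⁻¹
        + 2 * ((a : ℝ) ^ 2 * (c : ℝ) * ((m + c : ℕ) : ℝ) ^ 3)⁻¹) := by
  have hm' : (0 : ℝ) < (m : ℝ) := by exact_mod_cast hm
  have ha' : (0 : ℝ) < (a : ℝ) := by exact_mod_cast ha
  have hc' : (0 : ℝ) < (c : ℝ) := by exact_mod_cast ha.trans hac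
  push_cast
  have hma : (0 : ℝ) < (m : ℝ) + (a : ℝ) := by linarith
  have hmc : (0 : ℝ) < (m : ℝ) + (c : ℝ) := by linarith
  field_simp
  ring

lemma real_tsum_eq {ι : Type*} (f : ι → ℝ) (hf : ∀ i, 0 ≤ f i) :
    ∑' i, f i = (∑' i, ENNReal.ofReal (f i)).toReal := by
  rw [ENNReal.tsum_toReal_eq (fun i => ENNReal.ofReal_ne_top)]
  exact tsum_congr fun i => (ENNReal.toReal_ofReal (hf i)).symm

end ShuffleAux

set_option maxHeartbeats 2000000 in
open ShuffleAux in
/-- Shuffle product of `ζ(2,2) = Σ_{0<a<c} a⁻²c⁻²` with `ζ(2)`, the row-free hook case: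
`ζ(2,2)·ζ(2) = Σ_{m, a<c} [1/(m²(m+a)²(m+c)²) + 2/(m(m+a)³(m+c)²) + 2/(m(m+a)²(m+c)³)]`
`+ 2Σ_{m<a<c} 1/(m²a²c²) + 2Σ_{m<a<c} 1/(m a³ c²) + 2Σ_{m<a<c} 1/(m a² c³) + 4Σ_{m<a<c} 1/(m² a c³)`. -/
theorem shuffle_zeta22_zeta2_expanded :
    (∑' p : {p : ℕ × ℕ // 0 < p.1 ∧ p.1 < p.2},
        ((p.1.1 : ℝ) ^ 2 * (p.1.2 : ℝ) ^ 2)⁻¹) * zetaVal 2 =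
      (∑' q : {q : ℕ × ℕ × ℕ // 0 < q.1 ∧ 0 < q.2.1 ∧ q.2.1 < q.2.2},
        (((q.1.1 : ℝ) ^ 2 * ((q.1.1 + q.1.2.1 : ℕ) : ℝ) ^ 2 * ((q.1.1 + q.1.2.2 : ℕ) : ℝ) ^ 2)⁻¹
          + 2 * ((q.1.1 : ℝ) * ((q.1.1 + q.1.2.1 : ℕ) : ℝ) ^ 3 * ((q.1.1 + q.1.2.2 : ℕ) : ℝ) ^ 2)⁻¹
          + 2 * ((q.1.1 : ℝ) * ((q.1.1 + q.1.2.1 : ℕ) : ℝ) ^ 2 * ((q.1.1 + q.1.2.2 : ℕ) : ℝ) ^ 3)⁻¹))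
      + 2 * (∑' q : {q : ℕ × ℕ × ℕ // 0 < q.1 ∧ q.1 < q.2.1 ∧ q.2.1 < q.2.2},
          ((q.1.1 : ℝ) ^ 2 * (q.1.2.1 : ℝ) ^ 2 * (q.1.2.2 : ℝ) ^ 2)⁻¹)
      + 2 * (∑' q : {q : ℕ × ℕ × ℕ // 0 < q.1 ∧ q.1 < q.2.1 ∧ q.2.1 < q.2.2},
          ((q.1.1 : ℝ) * (q.1.2.1 : ℝ) ^ 3 * (q.1.2.2 : ℝ) ^ 2)⁻¹)
      + 2 * (∑' q : {q : ℕ × ℕ × ℕ // 0 < q.1 ∧ q.1 < q.2.1 ∧ q.2.1 < q.2.2},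
          ((q.1.1 : ℝ) * (q.1.2.1 : ℝ) ^ 2 * (q.1.2.2 : ℝ) ^ 3)⁻¹)
      + 4 * (∑' q : {q : ℕ × ℕ × ℕ // 0 < q.1 ∧ q.1 < q.2.1 ∧ q.2.1 < q.2.2},
          ((q.1.1 : ℝ) ^ 2 * (q.1.2.1 : ℝ) * (q.1.2.2 : ℝ) ^ 3)⁻¹) := by
  classical
  -- real term functions
  set f2 : P2 → ℝ := fun p => ((p.1.1 : ℝ) ^ 2 * (p.1.2 : ℝ) ^ 2)⁻¹ with hf2def
  set g2 : N1 → ℝ := fun n => (((n : ℕ) : ℝ) ^ 2)⁻¹ with hg2def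
  set fA : T3 → ℝ := (fun q =>
    ((q.1.1 : ℝ) ^ 2 * ((q.1.1 + q.1.2.1 : ℕ) : ℝ) ^ 2 * ((q.1.1 + q.1.2.2 : ℕ) : ℝ) ^ 2)⁻¹
      + 2 * ((q.1.1 : ℝ) * ((q.1.1 + q.1.2.1 : ℕ) : ℝ) ^ 3 * ((q.1.1 + q.1.2.2 : ℕ) : ℝ) ^ 2)⁻¹
      + 2 * ((q.1.1 : ℝ) * ((q.1.1 + q.1.2.1 : ℕ) : ℝ) ^ 2 * ((q.1.1 + q.1.2.2 : ℕ) : ℝ) ^ 3)⁻¹)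
    with hfAdef
  set f222 : S3 → ℝ := fun q => ((q.1.1 : ℝ) ^ 2 * (q.1.2.1 : ℝ) ^ 2 * (q.1.2.2 : ℝ) ^ 2)⁻¹
    with hf222def
  set f132 : S3 → ℝ := fun q => ((q.1.1 : ℝ) * (q.1.2.1 : ℝ) ^ 3 * (q.1.2.2 : ℝ) ^ 2)⁻¹
    with hf132def
  set f123 : S3 → ℝ := fun q => ((q.1.1 : ℝ) * (q.1.2.1 : ℝ) ^ 2 * (q.1.2.2 : ℝ) ^ 3)⁻¹
    with hf123def
  set f213 : S3 → ℝ := fun q => ((q.1.1 : ℝ) ^ 2 * (q.1.2.1 : ℝ) * (q.1.2.2 : ℝ) ^ 3)⁻¹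
    with hf213def
  -- ENNReal versions
  set E1 : ℝ≥0∞ := ∑' p : P2, ENNReal.ofReal (f2 p) with hE1def
  set E2 : ℝ≥0∞ := ∑' n : N1, ENNReal.ofReal (g2 n) with hE2def
  set EA : ℝ≥0∞ := ∑' t : T3, ENNReal.ofReal (fA t) with hEAdef
  set E222 : ℝ≥0∞ := ∑' s : S3, ENNReal.ofReal (f222 s) with hE222def
  set E132 : ℝ≥0∞ := ∑' s : S3, ENNReal.ofReal (f132 s) with hE132def
  set E123 : ℝ≥0∞ := ∑' s : S3, ENNReal.ofReal (f123 s) with hE123def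
  set E213 : ℝ≥0∞ := ∑' s : S3, ENNReal.ofReal (f213 s) with hE213def
  -- nonnegativity
  have hf2n : ∀ p, 0 ≤ f2 p := fun p => by positivity
  have hg2n : ∀ n, 0 ≤ g2 n := fun n => by positivity
  have hfAn : ∀ t, 0 ≤ fA t := fun t => by positivity
  have h222n : ∀ s, 0 ≤ f222 s := fun s => by positivity
  have h132n : ∀ s, 0 ≤ f132 s := fun s => by positivity
  have h123n : ∀ s, 0 ≤ f123 s := fun s => by positivity
  have h213n : ∀ s, 0 ≤ f213 s := fun s => by positivity
  -- the main ENNReal identity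
  have main : E1 * E2 = EA + 2 * E222 + 2 * E132 + 2 * E123 + 4 * E213 := by
    have step1 : E1 * E2 = ∑' x : P2 × N1, ENNReal.ofReal (f2 x.1 * g2 x.2) := by
      rw [hE1def, ← ENNReal.tsum_mul_right]
      rw [ENNReal.tsum_prod']
      refine tsum_congr fun p => ?_
      rw [hE2def, ← ENNReal.tsum_mul_left]
      exact tsum_congr fun n => (ENNReal.ofReal_mul (hf2n p)).symm
    have step2 : E1 * E2 = ∑' t : T3, ENNReal.ofReal (f2 (eP.symm t).1 * g2 (eP.symm t).2) := by
      rw [step1, ← eP.symm.tsum_eq (fun x : P2 × N1 => ENNReal.ofReal (f2 x.1 * g2 x.2))]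
    -- pointwise split
    have split : ∀ t : T3, ENNReal.ofReal (f2 (eP.symm t).1 * g2 (eP.symm t).2)
        = ENNReal.ofReal (fA t)
          + ENNReal.ofReal (f222 (eB t) + 2 * f132 (eB t) + 2 * f123 (eB t) + 2 * f213 (eB t))
          + ENNReal.ofReal (f222 (eC t) + 2 * f213 (eC t)) := by
      rintro ⟨⟨m, a, c⟩, hm, ha, hac⟩
      have hkey := key m a c hm ha hac
      have e1 : f2 (eP.symm ⟨(m, a, c), hm, ha, hac⟩).1 * g2 (eP.symm ⟨(m, a, c), hm, ha, hac⟩).2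
          = ((a : ℝ) ^ 2 * (c : ℝ) ^ 2)⁻¹ * ((m : ℝ) ^ 2)⁻¹ := rfl
      have e2 : fA ⟨(m, a, c), hm, ha, hac⟩
          = ((m : ℝ) ^ 2 * ((m + a : ℕ) : ℝ) ^ 2 * ((m + c : ℕ) : ℝ) ^ 2)⁻¹
            + 2 * ((m : ℝ) * ((m + a : ℕ) : ℝ) ^ 3 * ((m + c : ℕ) : ℝ) ^ 2)⁻¹
            + 2 * ((m : ℝ) * ((m + a : ℕ) : ℝ) ^ 2 * ((m + c : ℕ) : ℝ) ^ 3)⁻¹ := rfl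
      have e3 : f222 (eB ⟨(m, a, c), hm, ha, hac⟩) + 2 * f132 (eB ⟨(m, a, c), hm, ha, hac⟩)
            + 2 * f123 (eB ⟨(m, a, c), hm, ha, hac⟩) + 2 * f213 (eB ⟨(m, a, c), hm, ha, hac⟩)
          = ((a : ℝ) ^ 2 * ((m + a : ℕ) : ℝ) ^ 2 * ((m + c : ℕ) : ℝ) ^ 2)⁻¹
            + 2 * ((a : ℝ) * ((m + a : ℕ) : ℝ) ^ 3 * ((m + c : ℕ) : ℝ) ^ 2)⁻¹
            + 2 * ((a : ℝ) * ((m + a : ℕ) : ℝ) ^ 2 * ((m + c : ℕ) : ℝ) ^ 3)⁻¹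
            + 2 * ((a : ℝ) ^ 2 * ((m + a : ℕ) : ℝ) * ((m + c : ℕ) : ℝ) ^ 3)⁻¹ := rfl
      have e4 : f222 (eC ⟨(m, a, c), hm, ha, hac⟩) + 2 * f213 (eC ⟨(m, a, c), hm, ha, hac⟩)
          = ((a : ℝ) ^ 2 * (c : ℝ) ^ 2 * ((m + c : ℕ) : ℝ) ^ 2)⁻¹
            + 2 * ((a : ℝ) ^ 2 * (c : ℝ) * ((m + c : ℕ) : ℝ) ^ 3)⁻¹ := rfl
      rw [e1, hkey, ← e2, ← e3, ← e4]
      rw [ENNReal.ofReal_add, ENNReal.ofReal_add]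
      · exact hfAn _
      · positivity
      · positivity
      · positivity
    calc E1 * E2
        = ∑' t : T3, (ENNReal.ofReal (fA t)
            + ENNReal.ofReal (f222 (eB t) + 2 * f132 (eB t) + 2 * f123 (eB t) + 2 * f213 (eB t))
            + ENNReal.ofReal (f222 (eC t) + 2 * f213 (eC t))) := by
          rw [step2]; exact tsum_congr split
      _ = EA + (∑' t : T3, ENNReal.ofReal
              (f222 (eB t) + 2 * f132 (eB t) + 2 * f123 (eB t) + 2 * f213 (eB t)))
            + (∑' t : T3, ENNReal.ofReal (f222 (eC t) + 2 * f213 (eC t))) := by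
          rw [ENNReal.tsum_add, ENNReal.tsum_add]
      _ = EA + (E222 + 2 * E132 + 2 * E123 + 2 * E213) + (E222 + 2 * E213) := by
          congr 1
          · congr 1
            rw [eB.tsum_eq (fun s : S3 => ENNReal.ofReal (f222 s + 2 * f132 s + 2 * f123 s + 2 * f213 s))]
            have : ∀ s : S3, ENNReal.ofReal (f222 s + 2 * f132 s + 2 * f123 s + 2 * f213 s)
                = ENNReal.ofReal (f222 s) + 2 * ENNReal.ofReal (f132 s)
                  + 2 * ENNReal.ofReal (f123 s) + 2 * ENNReal.ofReal (f213 s) := by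
              intro s
              rw [ENNReal.ofReal_add (by positivity) (by positivity),
                ENNReal.ofReal_add (by positivity) (by positivity),
                ENNReal.ofReal_add (by positivity) (by positivity)]
              rw [ENNReal.ofReal_mul (by norm_num), ENNReal.ofReal_mul (by norm_num),
                ENNReal.ofReal_mul (by norm_num)]
              norm_num
            rw [tsum_congr this, ENNReal.tsum_add, ENNReal.tsum_add, ENNReal.tsum_add,
              ENNReal.tsum_mul_left, ENNReal.tsum_mul_left, ENNReal.tsum_mul_left]
          · rw [eC.tsum_eq (fun s : S3 => ENNReal.ofReal (f222 s + 2 * f213 s))]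
            have : ∀ s : S3, ENNReal.ofReal (f222 s + 2 * f213 s)
                = ENNReal.ofReal (f222 s) + 2 * ENNReal.ofReal (f213 s) := by
              intro s
              rw [ENNReal.ofReal_add (by positivity) (by positivity),
                ENNReal.ofReal_mul (by norm_num)]
              norm_num
            rw [tsum_congr this, ENNReal.tsum_add, ENNReal.tsum_mul_left]
      _ = EA + 2 * E222 + 2 * E132 + 2 * E123 + 4 * E213 := by ring
  -- finiteness
  have hsum2 : Summable (fun n : ℕ => ((n : ℝ) ^ 2)⁻¹) :=
    Real.summable_nat_pow_inv.mpr one_lt_two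
  have hE2ne : E2 ≠ ⊤ := by
    rw [hE2def, ← ENNReal.ofReal_tsum_of_nonneg hg2n (hsum2.subtype _)]
    exact ENNReal.ofReal_ne_top
  have hE1ne : E1 ≠ ⊤ := by
    have hprod : Summable (fun x : ℕ × ℕ => ((x.1 : ℝ) ^ 2)⁻¹ * ((x.2 : ℝ) ^ 2)⁻¹) :=
      hsum2.mul_of_nonneg hsum2 (fun n => by positivity) (fun n => by positivity)
    have hf2s : Summable f2 := by
      have := hprod.subtype {p : ℕ × ℕ | 0 < p.1 ∧ p.1 < p.2}
      refine this.congr fun p => ?_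
      simp [hf2def, mul_inv]
      ring
    rw [hE1def, ← ENNReal.ofReal_tsum_of_nonneg hf2n hf2s]
    exact ENNReal.ofReal_ne_top
  have htot : EA + 2 * E222 + 2 * E132 + 2 * E123 + 4 * E213 ≠ ⊤ := by
    rw [← main]; exact ENNReal.mul_ne_top hE1ne hE2ne
  have hEAne : EA ≠ ⊤ := by
    refine ne_top_of_le_ne_top htot ?_
    calc EA ≤ EA + 2 * E222 := le_self_add
      _ ≤ EA + 2 * E222 + 2 * E132 := le_self_add
      _ ≤ EA + 2 * E222 + 2 * E132 + 2 * E123 := le_self_add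
      _ ≤ _ := le_self_add
  have h2 : ∀ x : ℝ≥0∞, (2 : ℝ≥0∞) * x ≠ ⊤ → x ≠ ⊤ := by
    intro x hx
    intro h; rw [h] at hx; simp at hx
  have h4 : ∀ x : ℝ≥0∞, (4 : ℝ≥0∞) * x ≠ ⊤ → x ≠ ⊤ := by
    intro x hx
    intro h; rw [h] at hx; simp at hx
  have hE222ne : E222 ≠ ⊤ := by
    refine h2 _ (ne_top_of_le_ne_top htot ?_)
    calc (2:ℝ≥0∞) * E222 ≤ EA + 2 * E222 := le_add_self
      _ ≤ EA + 2 * E222 + 2 * E132 := le_self_add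
      _ ≤ EA + 2 * E222 + 2 * E132 + 2 * E123 := le_self_add
      _ ≤ _ := le_self_add
  have hE132ne : E132 ≠ ⊤ := by
    refine h2 _ (ne_top_of_le_ne_top htot ?_)
    calc (2:ℝ≥0∞) * E132 ≤ EA + 2 * E222 + 2 * E132 := le_add_self
      _ ≤ EA + 2 * E222 + 2 * E132 + 2 * E123 := le_self_add
      _ ≤ _ := le_self_add
  have hE123ne : E123 ≠ ⊤ := by
    refine h2 _ (ne_top_of_le_ne_top htot ?_)
    calc (2:ℝ≥0∞) * E123 ≤ EA + 2 * E222 + 2 * E132 + 2 * E123 := le_add_self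
      _ ≤ _ := le_self_add
  have hE213ne : E213 ≠ ⊤ := h4 _ (ne_top_of_le_ne_top htot le_add_self)
  -- convert the goal to toReal form
  have g1 : (∑' p : P2, ((p.1.1 : ℝ) ^ 2 * (p.1.2 : ℝ) ^ 2)⁻¹) = E1.toReal := by
    rw [hE1def]; exact real_tsum_eq f2 hf2n
  have g2' : zetaVal 2 = E2.toReal := by
    rw [hE2def]; exact real_tsum_eq g2 hg2n
  have gA : (∑' q : T3,
      (((q.1.1 : ℝ) ^ 2 * ((q.1.1 + q.1.2.1 : ℕ) : ℝ) ^ 2 * ((q.1.1 + q.1.2.2 : ℕ) : ℝ) ^ 2)⁻¹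
        + 2 * ((q.1.1 : ℝ) * ((q.1.1 + q.1.2.1 : ℕ) : ℝ) ^ 3 * ((q.1.1 + q.1.2.2 : ℕ) : ℝ) ^ 2)⁻¹
        + 2 * ((q.1.1 : ℝ) * ((q.1.1 + q.1.2.1 : ℕ) : ℝ) ^ 2 * ((q.1.1 + q.1.2.2 : ℕ) : ℝ) ^ 3)⁻¹))
      = EA.toReal := by
    rw [hEAdef]; exact real_tsum_eq fA hfAn
  have g222 : (∑' q : S3, ((q.1.1 : ℝ) ^ 2 * (q.1.2.1 : ℝ) ^ 2 * (q.1.2.2 : ℝ) ^ 2)⁻¹)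
      = E222.toReal := by rw [hE222def]; exact real_tsum_eq f222 h222n
  have g132 : (∑' q : S3, ((q.1.1 : ℝ) * (q.1.2.1 : ℝ) ^ 3 * (q.1.2.2 : ℝ) ^ 2)⁻¹)
      = E132.toReal := by rw [hE132def]; exact real_tsum_eq f132 h132n
  have g123 : (∑' q : S3, ((q.1.1 : ℝ) * (q.1.2.1 : ℝ) ^ 2 * (q.1.2.2 : ℝ) ^ 3)⁻¹)
      = E123.toReal := by rw [hE123def]; exact real_tsum_eq f123 h123n
  have g213 : (∑' q : S3, ((q.1.1 : ℝ) ^ 2 * (q.1.2.1 : ℝ) * (q.1.2.2 : ℝ) ^ 3)⁻¹)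
      = E213.toReal := by rw [hE213def]; exact real_tsum_eq f213 h213n
  rw [g1, g2', gA, g222, g132, g123, g213, ← ENNReal.toReal_mul, main]
  rw [ENNReal.toReal_add, ENNReal.toReal_add, ENNReal.toReal_add, ENNReal.toReal_add,
    ENNReal.toReal_mul, ENNReal.toReal_mul, ENNReal.toReal_mul, ENNReal.toReal_mul]
  · norm_num
  all_goals first
    | exact hEAne
    | exact ENNReal.mul_ne_top (by norm_num) hE222ne
    | exact ENNReal.mul_ne_top (by norm_num) hE132ne
    | exact ENNReal.mul_ne_top (by norm_num) hE123ne
    | exact ENNReal.mul_ne_top (by norm_num) hE213ne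
    | exact ENNReal.add_ne_top.mpr ⟨hEAne, ENNReal.mul_ne_top (by norm_num) hE222ne⟩
    | exact ENNReal.add_ne_top.mpr ⟨ENNReal.add_ne_top.mpr ⟨hEAne, ENNReal.mul_ne_top (by norm_num) hE222ne⟩, ENNReal.mul_ne_top (by norm_num) hE132ne⟩
    | exact ENNReal.add_ne_top.mpr ⟨ENNReal.add_ne_top.mpr ⟨ENNReal.add_ne_top.mpr ⟨hEAne, ENNReal.mul_ne_top (by norm_num) hE222ne⟩, ENNReal.mul_ne_top (by norm_num) hE132ne⟩, ENNReal.mul_ne_top (by norm_num) hE123ne⟩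
end

section
/- Shuffle product of ζ(2,2) and ζ(2) (classical case, coefficients from the 2-poset computation): ζ(2,2)·ζ(2) = T + 2ζ(2,2,2) + 2ζ(1,3,2) + 2ζ(1,2,3) + 4ζ(2,1,3), where T = Σ over positive integers m, a, c with a < c of [1/(m²(m+a)²(m+c)²) + 2/(m(m+a)³(m+c)²) + 2/(m(m+a)²(m+c)³)]. -/
/-- Double zeta value `ζ(a,b) = Σ_{0 < n < m} n⁻ᵃ m⁻ᵇ`. -/
noncomputable def mzv2 (a b : ℕ) : ℝ :=
  ∑' p : {p : ℕ × ℕ // 0 < p.1 ∧ p.1 < p.2},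
    (((p : ℕ × ℕ).1 : ℝ) ^ a * ((p : ℕ × ℕ).2 : ℝ) ^ b)⁻¹

/-- Triple zeta value `ζ(a,b,c) = Σ_{0 < n < m < p} n⁻ᵃ m⁻ᵇ p⁻ᶜ`. -/
noncomputable def mzv3 (a b c : ℕ) : ℝ :=
  ∑' p : {p : ℕ × ℕ × ℕ // 0 < p.1 ∧ p.1 < p.2.1 ∧ p.2.1 < p.2.2},
    ((p.1.1 : ℝ) ^ a * (p.1.2.1 : ℝ) ^ b * (p.1.2.2 : ℝ) ^ c)⁻¹

namespace ShuffleAux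

open scoped ENNReal NNReal

/-- `W x s = (x^s)⁻¹` in `ℝ≥0∞`. -/
noncomputable def W (x s : ℕ) : ℝ≥0∞ := ((x : ℝ≥0∞) ^ s)⁻¹

lemma W_ne_top {x : ℕ} (hx : 0 < x) (s : ℕ) : W x s ≠ ∞ := by
  rw [W, ENNReal.inv_ne_top]
  exact pow_ne_zero _ (by exact_mod_cast hx.ne')

lemma W_toReal (x s : ℕ) : (W x s).toReal = ((x:ℝ)^s)⁻¹ := by simp [W]

lemma W3_ne_top {x y z : ℕ} (hx : 0 < x) (hy : 0 < y) (hz : 0 < z) (s t u : ℕ) :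
    W x s * W y t * W z u ≠ ∞ :=
  ENNReal.mul_ne_top (ENNReal.mul_ne_top (W_ne_top hx s) (W_ne_top hy t)) (W_ne_top hz u)

lemma toReal_W3 (x s y t z u : ℕ) :
    (W x s * W y t * W z u).toReal = ((x:ℝ)^s * (y:ℝ)^t * (z:ℝ)^u)⁻¹ := by
  rw [ENNReal.toReal_mul, ENNReal.toReal_mul, W_toReal, W_toReal, W_toReal, mul_inv, mul_inv]

lemma W_coe {x : ℕ} (hx : x ≠ 0) (s : ℕ) :
    W x s = (((((x:ℝ≥0))^s)⁻¹ : ℝ≥0) : ℝ≥0∞) := by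
  rw [W, ENNReal.coe_inv (pow_ne_zero _ (by exact_mod_cast hx))]
  push_cast
  rfl

lemma natCast_mul_inv (x y : ℕ) :
    ((x*y : ℕ) : ℝ≥0∞)⁻¹ = ((x:ℝ≥0∞))⁻¹ * ((y:ℝ≥0∞))⁻¹ := by
  push_cast
  rw [ENNReal.mul_inv (Or.inr (ENNReal.natCast_ne_top _)) (Or.inl (ENNReal.natCast_ne_top _))]

lemma W_mul (x s y t : ℕ) : W x s * W y t = (((x^s * y^t : ℕ)) : ℝ≥0∞)⁻¹ := by
  rw [natCast_mul_inv, W, W]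
  push_cast
  rfl

lemma W_mul3 (x s y t z u : ℕ) :
    W x s * W y t * W z u = (((x^s * y^t * z^u : ℕ)) : ℝ≥0∞)⁻¹ := by
  rw [natCast_mul_inv, ← W_mul, W]
  push_cast
  rfl

/-- Partial fraction identity: `1/(x²y²) = 1/(w²x²)+1/(w²y²)+2/(w³x)+2/(w³y)`, `w = x+y`. -/
lemma pf1 {x y : ℕ} (hx : x ≠ 0) (hy : y ≠ 0) :
    W x 2 * W y 2 = W (x+y) 2 * W x 2 + W (x+y) 2 * W y 2
      + 2 * (W (x+y) 3 * W x 1) + 2 * (W (x+y) 3 * W y 1) := by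
  have hxy : x + y ≠ 0 := by omega
  simp only [W_coe hx, W_coe hy, W_coe hxy]
  rw [← ENNReal.coe_mul, ← ENNReal.coe_mul, ← ENNReal.coe_mul, ← ENNReal.coe_mul]
  norm_cast
  apply NNReal.coe_injective
  push_cast
  have hx' : (x:ℝ) ≠ 0 := by exact_mod_cast hx
  have hy' : (y:ℝ) ≠ 0 := by exact_mod_cast hy
  have hxy' : (x:ℝ)+(y:ℝ) ≠ 0 := by positivity
  field_simp
  ring

/-- Partial fraction identity: `1/(x²y) = 1/(sx²)+1/(s²x)+1/(s²y)`, `s = x+y`. -/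
lemma pf2 {x y : ℕ} (hx : x ≠ 0) (hy : y ≠ 0) :
    W x 2 * W y 1 = W (x+y) 1 * W x 2 + W (x+y) 2 * W x 1 + W (x+y) 2 * W y 1 := by
  have hxy : x + y ≠ 0 := by omega
  simp only [W_coe hx, W_coe hy, W_coe hxy]
  rw [← ENNReal.coe_mul, ← ENNReal.coe_mul, ← ENNReal.coe_mul, ← ENNReal.coe_mul]
  norm_cast
  apply NNReal.coe_injective
  push_cast
  have hx' : (x:ℝ) ≠ 0 := by exact_mod_cast hx
  have hy' : (y:ℝ) ≠ 0 := by exact_mod_cast hy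
  have hxy' : (x:ℝ)+(y:ℝ) ≠ 0 := by positivity
  field_simp
  ring

noncomputable def E1 : ℝ≥0∞ := ∑' i : ℕ+, W i 2
noncomputable def E2 : ℝ≥0∞ := ∑' (i : ℕ+) (j : ℕ+), W i 2 * W ((i:ℕ) + (j:ℕ)) 2
noncomputable def E3 (a b c : ℕ) : ℝ≥0∞ :=
  ∑' (i : ℕ+) (j : ℕ+) (k : ℕ+),
    W i a * W ((i:ℕ) + (j:ℕ)) b * W ((i:ℕ) + (j:ℕ) + (k:ℕ)) c

/-! ### Reindexing equivalences -/

def q2 : ℕ+ × ℕ+ ≃ {p : ℕ × ℕ // 0 < p.1 ∧ p.1 < p.2} where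
  toFun x := ⟨((x.1 : ℕ), (x.1 : ℕ) + (x.2 : ℕ)),
    ⟨x.1.pos, Nat.lt_add_of_pos_right x.2.pos⟩⟩
  invFun p := (⟨p.1.1, p.2.1⟩, ⟨p.1.2 - p.1.1, by have := p.2; omega⟩)
  left_inv x := by
    ext
    · rfl
    · exact Subtype.ext (by simp; rfl)
  right_inv p := by
    have h := p.2
    apply Subtype.ext
    ext
    · rfl
    · simp only [PNat.mk_coe]
      omega

def q3 : ℕ+ × ℕ+ × ℕ+ ≃ {p : ℕ × ℕ × ℕ // 0 < p.1 ∧ p.1 < p.2.1 ∧ p.2.1 < p.2.2} where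
  toFun x := ⟨((x.1 : ℕ), (x.1 : ℕ) + (x.2.1 : ℕ), (x.1 : ℕ) + (x.2.1 : ℕ) + (x.2.2 : ℕ)),
    ⟨x.1.pos, Nat.lt_add_of_pos_right x.2.1.pos, Nat.lt_add_of_pos_right x.2.2.pos⟩⟩
  invFun p := (⟨p.1.1, p.2.1⟩, ⟨p.1.2.1 - p.1.1, by have := p.2.2.1; omega⟩,
    ⟨p.1.2.2 - p.1.2.1, by have := p.2.2.2; omega⟩)
  left_inv x := by
    ext
    · rfl
    · exact Subtype.ext (by simp; rfl)
    · exact Subtype.ext (by simp; rfl)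
  right_inv p := by
    have h1 := p.2.1
    have h2 := p.2.2.1
    have h3 := p.2.2.2
    apply Subtype.ext
    ext
    · rfl
    · simp only [PNat.mk_coe]
      omega
    · simp only [PNat.mk_coe]
      omega

def qT : ℕ+ × ℕ+ × ℕ+ ≃ {q : ℕ × ℕ × ℕ // 0 < q.1 ∧ 0 < q.2.1 ∧ q.2.1 < q.2.2} where
  toFun x := ⟨((x.1 : ℕ), (x.2.1 : ℕ), (x.2.1 : ℕ) + (x.2.2 : ℕ)),
    ⟨x.1.pos, x.2.1.pos, Nat.lt_add_of_pos_right x.2.2.pos⟩⟩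
  invFun q := (⟨q.1.1, q.2.1⟩, ⟨q.1.2.1, q.2.2.1⟩,
    ⟨q.1.2.2 - q.1.2.1, by have := q.2.2.2; omega⟩)
  left_inv x := by
    ext
    · rfl
    · rfl
    · exact Subtype.ext (by simp; rfl)
  right_inv q := by
    have h3 := q.2.2.2
    apply Subtype.ext
    ext
    · rfl
    · rfl
    · simp only [PNat.mk_coe]
      omega

/-! ### Subtype representations and conversion to real values -/

lemma E3_subtype (a b c : ℕ) :
    E3 a b c = ∑' p : {p : ℕ × ℕ × ℕ // 0 < p.1 ∧ p.1 < p.2.1 ∧ p.2.1 < p.2.2},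
      W (p:ℕ×ℕ×ℕ).1 a * W (p:ℕ×ℕ×ℕ).2.1 b * W (p:ℕ×ℕ×ℕ).2.2 c := by
  rw [← q3.tsum_eq (fun p : {p : ℕ × ℕ × ℕ // 0 < p.1 ∧ p.1 < p.2.1 ∧ p.2.1 < p.2.2} =>
    W (p:ℕ×ℕ×ℕ).1 a * W (p:ℕ×ℕ×ℕ).2.1 b * W (p:ℕ×ℕ×ℕ).2.2 c)]
  rw [E3, ENNReal.tsum_prod']
  refine tsum_congr fun i => Eq.symm ?_
  exact ENNReal.tsum_prod' (f := fun jk : ℕ+ × ℕ+ =>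
    W ((q3 (i, jk) : ℕ × ℕ × ℕ)).1 a * W ((q3 (i, jk) : ℕ × ℕ × ℕ)).2.1 b *
      W ((q3 (i, jk) : ℕ × ℕ × ℕ)).2.2 c)

lemma E2_subtype :
    E2 = ∑' p : {p : ℕ × ℕ // 0 < p.1 ∧ p.1 < p.2},
      W (p:ℕ×ℕ).1 2 * W (p:ℕ×ℕ).2 2 := by
  rw [← q2.tsum_eq (fun p : {p : ℕ × ℕ // 0 < p.1 ∧ p.1 < p.2} =>
    W (p:ℕ×ℕ).1 2 * W (p:ℕ×ℕ).2 2)]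
  rw [E2]
  exact Eq.symm (ENNReal.tsum_prod' (f := fun ij : ℕ+ × ℕ+ =>
    W ((q2 ij : ℕ × ℕ)).1 2 * W ((q2 ij : ℕ × ℕ)).2 2))

lemma mzv3_eq (a b c : ℕ) : mzv3 a b c = (E3 a b c).toReal := by
  rw [E3_subtype, mzv3,
    ENNReal.tsum_toReal_eq (fun p => by
      have h1 := p.2.1
      have h2 := p.2.2.1
      have h3 := p.2.2.2
      exact W3_ne_top h1 (by omega) (by omega) a b c)]
  exact tsum_congr fun p => (toReal_W3 _ _ _ _ _ _).symm

lemma mzv2_eq : mzv2 2 2 = E2.toReal := by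
  rw [E2_subtype, mzv2,
    ENNReal.tsum_toReal_eq (fun p => by
      have h1 := p.2.1
      have h2 := p.2.2
      exact ENNReal.mul_ne_top (W_ne_top h1 2) (W_ne_top (by omega) 2))]
  refine tsum_congr fun p => ?_
  rw [ENNReal.toReal_mul, W_toReal, W_toReal, mul_inv]

lemma zeta_eq : zetaVal 2 = E1.toReal := by
  rw [E1, zetaVal, ENNReal.tsum_toReal_eq (fun i => W_ne_top i.pos 2)]
  exact tsum_congr fun n => (W_toReal _ _).symm

/-! ### Summation lemmas over `ℕ+` triples -/

lemma swap_inner (f : ℕ+ → ℕ+ → ℕ+ → ℝ≥0∞) :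
    ∑' (u : ℕ+) (j : ℕ+) (k : ℕ+), f u j k = ∑' (u : ℕ+) (k : ℕ+) (j : ℕ+), f u j k :=
  tsum_congr fun _ => ENNReal.tsum_comm

lemma rot (f : ℕ+ → ℕ+ → ℕ+ → ℝ≥0∞) :
    ∑' (u : ℕ+) (j : ℕ+) (k : ℕ+), f u j k = ∑' (k : ℕ+) (u : ℕ+) (j : ℕ+), f u j k := by
  rw [swap_inner]
  exact ENNReal.tsum_comm

lemma tsum3_two (f : ℕ+ → ℕ+ → ℕ+ → ℝ≥0∞) :
    (∑' (u : ℕ+) (j : ℕ+) (k : ℕ+), 2 * f u j k)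
      = 2 * ∑' (u : ℕ+) (j : ℕ+) (k : ℕ+), f u j k :=
  ((tsum_congr fun u => (tsum_congr fun j =>
    (ENNReal.tsum_mul_left (a := 2) (f := fun k => f u j k))).trans
      (ENNReal.tsum_mul_left (a := 2) (f := fun j => ∑' k, f u j k))).trans
    (ENNReal.tsum_mul_left (a := 2) (f := fun u => ∑' (j : ℕ+) (k : ℕ+), f u j k)))

/-! ### Identification of rearranged sums with `E3` values -/

lemma idA : (∑' (u : ℕ+) (j : ℕ+) (k : ℕ+),
    W u 2 * W ((u:ℕ)+(j:ℕ)) 2 * W ((u:ℕ)+(j:ℕ)+(k:ℕ)) 2) = E3 2 2 2 := rfl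

lemma idC : (∑' (u : ℕ+) (j : ℕ+) (k : ℕ+),
    W u 2 * W ((u:ℕ)+(j:ℕ)) 1 * W ((u:ℕ)+(j:ℕ)+(k:ℕ)) 3) = E3 2 1 3 := rfl

lemma idT1 : (∑' (u : ℕ+) (j : ℕ+) (k : ℕ+),
    W u 2 * W ((u:ℕ)+(k:ℕ)) 2 * W ((u:ℕ)+(k:ℕ)+(j:ℕ)) 2) = E3 2 2 2 :=
  swap_inner (fun u j k => W u 2 * W ((u:ℕ)+(k:ℕ)) 2 * W ((u:ℕ)+(k:ℕ)+(j:ℕ)) 2)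

lemma idT2 : (∑' (u : ℕ+) (j : ℕ+) (k : ℕ+),
    W k 2 * W ((u:ℕ)+(k:ℕ)) 2 * W ((u:ℕ)+(k:ℕ)+(j:ℕ)) 2) = E3 2 2 2 := by
  rw [rot (fun u j k => W k 2 * W ((u:ℕ)+(k:ℕ)) 2 * W ((u:ℕ)+(k:ℕ)+(j:ℕ)) 2), E3]
  refine tsum_congr fun k => tsum_congr fun u => tsum_congr fun j => ?_
  rw [Nat.add_comm (u:ℕ) (k:ℕ)]

lemma idT3 : (∑' (u : ℕ+) (j : ℕ+) (k : ℕ+),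
    W u 1 * W ((u:ℕ)+(k:ℕ)) 3 * W ((u:ℕ)+(k:ℕ)+(j:ℕ)) 2) = E3 1 3 2 :=
  swap_inner (fun u j k => W u 1 * W ((u:ℕ)+(k:ℕ)) 3 * W ((u:ℕ)+(k:ℕ)+(j:ℕ)) 2)

lemma idT4 : (∑' (u : ℕ+) (j : ℕ+) (k : ℕ+),
    W k 1 * W ((u:ℕ)+(k:ℕ)) 3 * W ((u:ℕ)+(k:ℕ)+(j:ℕ)) 2) = E3 1 3 2 := by
  rw [rot (fun u j k => W k 1 * W ((u:ℕ)+(k:ℕ)) 3 * W ((u:ℕ)+(k:ℕ)+(j:ℕ)) 2), E3]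
  refine tsum_congr fun k => tsum_congr fun u => tsum_congr fun j => ?_
  rw [Nat.add_comm (u:ℕ) (k:ℕ)]

lemma idD1 : (∑' (u : ℕ+) (j : ℕ+) (k : ℕ+),
    W u 2 * W ((u:ℕ)+(k:ℕ)) 1 * W ((u:ℕ)+(k:ℕ)+(j:ℕ)) 3) = E3 2 1 3 :=
  swap_inner (fun u j k => W u 2 * W ((u:ℕ)+(k:ℕ)) 1 * W ((u:ℕ)+(k:ℕ)+(j:ℕ)) 3)

lemma idD2 : (∑' (u : ℕ+) (j : ℕ+) (k : ℕ+),
    W u 1 * W ((u:ℕ)+(k:ℕ)) 2 * W ((u:ℕ)+(k:ℕ)+(j:ℕ)) 3) = E3 1 2 3 :=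
  swap_inner (fun u j k => W u 1 * W ((u:ℕ)+(k:ℕ)) 2 * W ((u:ℕ)+(k:ℕ)+(j:ℕ)) 3)

lemma idD3 : (∑' (u : ℕ+) (j : ℕ+) (k : ℕ+),
    W k 1 * W ((u:ℕ)+(k:ℕ)) 2 * W ((u:ℕ)+(k:ℕ)+(j:ℕ)) 3) = E3 1 2 3 := by
  rw [rot (fun u j k => W k 1 * W ((u:ℕ)+(k:ℕ)) 2 * W ((u:ℕ)+(k:ℕ)+(j:ℕ)) 3), E3]
  refine tsum_congr fun k => tsum_congr fun u => tsum_congr fun j => ?_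
  rw [Nat.add_comm (u:ℕ) (k:ℕ)]

/-! ### The main `ℝ≥0∞`-valued computation -/

lemma step1 : E2 * E1 = ∑' (u : ℕ+) (j : ℕ+) (k : ℕ+),
    W u 2 * W ((u:ℕ)+(j:ℕ)) 2 * W k 2 := by
  rw [E2, E1, ← ENNReal.tsum_mul_right]
  refine tsum_congr fun u => ?_
  rw [← ENNReal.tsum_mul_right]
  exact tsum_congr fun j => (ENNReal.tsum_mul_left).symm

lemma expandB (u j k : ℕ+) :
    W u 2 * W ((u:ℕ)+(j:ℕ)) 2 * W k 2
      = (W u 2 * W ((u:ℕ)+(j:ℕ)) 2 * W ((u:ℕ)+(j:ℕ)+(k:ℕ)) 2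
          + 2 * (W u 2 * W ((u:ℕ)+(j:ℕ)) 1 * W ((u:ℕ)+(j:ℕ)+(k:ℕ)) 3))
        + (W u 2 * W k 2 * W ((u:ℕ)+(j:ℕ)+(k:ℕ)) 2
          + 2 * (W u 2 * W k 1 * W ((u:ℕ)+(j:ℕ)+(k:ℕ)) 3)) := by
  have h := pf1 (x := (u:ℕ)+(j:ℕ)) (y := (k:ℕ))
    (Nat.add_pos_left u.pos _).ne' k.pos.ne'
  calc W u 2 * W ((u:ℕ)+(j:ℕ)) 2 * W k 2
      = W u 2 * (W ((u:ℕ)+(j:ℕ)) 2 * W k 2) := by ring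
    _ = _ := by rw [h]; ring

lemma step2 : E2 * E1 = E3 2 2 2 + 2 * E3 2 1 3
    + ((∑' (u : ℕ+) (j : ℕ+) (k : ℕ+), W u 2 * W k 2 * W ((u:ℕ)+(j:ℕ)+(k:ℕ)) 2)
      + 2 * ∑' (u : ℕ+) (j : ℕ+) (k : ℕ+), W u 2 * W k 1 * W ((u:ℕ)+(j:ℕ)+(k:ℕ)) 3) := by
  refine step1.trans ?_
  refine (tsum_congr fun u => tsum_congr fun j => tsum_congr fun k => expandB u j k).trans ?_
  simp only [ENNReal.tsum_add]
  rw [tsum3_two (fun u j k => W u 2 * W ((u:ℕ)+(j:ℕ)) 1 * W ((u:ℕ)+(j:ℕ)+(k:ℕ)) 3),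
    tsum3_two (fun u j k => W u 2 * W k 1 * W ((u:ℕ)+(j:ℕ)+(k:ℕ)) 3), idA, idC]

lemma SB_eq : (∑' (u : ℕ+) (j : ℕ+) (k : ℕ+),
    W u 2 * W k 2 * W ((u:ℕ)+(j:ℕ)+(k:ℕ)) 2) = 2 * E3 2 2 2 + 4 * E3 1 3 2 := by
  have hpt : ∀ u j k : ℕ+, W u 2 * W k 2 * W ((u:ℕ)+(j:ℕ)+(k:ℕ)) 2 =
      W u 2 * W ((u:ℕ)+(k:ℕ)) 2 * W ((u:ℕ)+(k:ℕ)+(j:ℕ)) 2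
      + W k 2 * W ((u:ℕ)+(k:ℕ)) 2 * W ((u:ℕ)+(k:ℕ)+(j:ℕ)) 2
      + 2 * (W u 1 * W ((u:ℕ)+(k:ℕ)) 3 * W ((u:ℕ)+(k:ℕ)+(j:ℕ)) 2)
      + 2 * (W k 1 * W ((u:ℕ)+(k:ℕ)) 3 * W ((u:ℕ)+(k:ℕ)+(j:ℕ)) 2) := by
    intro u j k
    have e : ((u:ℕ)+(j:ℕ)+(k:ℕ)) = ((u:ℕ)+(k:ℕ)+(j:ℕ)) := by omega
    rw [e, pf1 u.pos.ne' k.pos.ne']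
    ring
  refine (tsum_congr fun u => tsum_congr fun j => tsum_congr fun k => hpt u j k).trans ?_
  simp only [ENNReal.tsum_add]
  rw [tsum3_two (fun u j k => W u 1 * W ((u:ℕ)+(k:ℕ)) 3 * W ((u:ℕ)+(k:ℕ)+(j:ℕ)) 2),
    tsum3_two (fun u j k => W k 1 * W ((u:ℕ)+(k:ℕ)) 3 * W ((u:ℕ)+(k:ℕ)+(j:ℕ)) 2),
    idT1, idT2, idT3, idT4]
  ring

lemma SD_eq : (∑' (u : ℕ+) (j : ℕ+) (k : ℕ+),
    W u 2 * W k 1 * W ((u:ℕ)+(j:ℕ)+(k:ℕ)) 3) = E3 2 1 3 + 2 * E3 1 2 3 := by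
  have hpt : ∀ u j k : ℕ+, W u 2 * W k 1 * W ((u:ℕ)+(j:ℕ)+(k:ℕ)) 3 =
      W u 2 * W ((u:ℕ)+(k:ℕ)) 1 * W ((u:ℕ)+(k:ℕ)+(j:ℕ)) 3
      + W u 1 * W ((u:ℕ)+(k:ℕ)) 2 * W ((u:ℕ)+(k:ℕ)+(j:ℕ)) 3
      + W k 1 * W ((u:ℕ)+(k:ℕ)) 2 * W ((u:ℕ)+(k:ℕ)+(j:ℕ)) 3 := by
    intro u j k
    have e : ((u:ℕ)+(j:ℕ)+(k:ℕ)) = ((u:ℕ)+(k:ℕ)+(j:ℕ)) := by omega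
    rw [e, pf2 u.pos.ne' k.pos.ne']
    ring
  refine (tsum_congr fun u => tsum_congr fun j => tsum_congr fun k => hpt u j k).trans ?_
  simp only [ENNReal.tsum_add]
  rw [idD1, idD2, idD3]
  ring

/-- The key shuffle identity, in `ℝ≥0∞`. -/
lemma key_s14 : E2 * E1 = (E3 2 2 2 + 2 * E3 1 3 2 + 2 * E3 1 2 3)
    + 2 * E3 2 2 2 + 2 * E3 1 3 2 + 2 * E3 1 2 3 + 4 * E3 2 1 3 := by
  rw [step2, SB_eq, SD_eq]
  ring

/-! ### Finiteness -/

lemma E1_ne_top : E1 ≠ ∞ := by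
  have hr : Summable (fun i : ℕ+ => (((i:ℕ):ℝ)^2)⁻¹) := by
    have h : Summable (fun n : ℕ => ((n:ℝ)^2)⁻¹) := by
      simpa [one_div] using Real.summable_one_div_nat_pow.2 (by norm_num : 1 < 2)
    exact h.comp_injective (fun a b h => by exact PNat.coe_injective h)
  have hs : Summable (fun i : ℕ+ => (((((i:ℕ):ℝ≥0))^2)⁻¹ : ℝ≥0)) := by
    refine NNReal.summable_coe.1 ?_
    have : (fun i : ℕ+ => ((((((i:ℕ):ℝ≥0))^2)⁻¹ : ℝ≥0) : ℝ)) = fun i : ℕ+ => (((i:ℕ):ℝ)^2)⁻¹ := by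
      funext i
      push_cast
      rfl
    rw [this]
    exact hr
  have he : E1 = ∑' i : ℕ+, ((((((i:ℕ):ℝ≥0))^2)⁻¹ : ℝ≥0) : ℝ≥0∞) :=
    tsum_congr fun i => W_coe i.pos.ne' 2
  rw [he]
  exact ENNReal.tsum_coe_ne_top_iff_summable.2 hs

lemma sep3 : (∑' (i : ℕ+) (j : ℕ+) (k : ℕ+), W i 2 * W j 2 * W k 2)
    = E1 * (E1 * E1) := by
  rw [E1]
  simp only [mul_assoc, ENNReal.tsum_mul_left, ENNReal.tsum_mul_right]

lemma E3_ne_top (a b c : ℕ)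
    (h : ∀ u v w : ℕ+, (u:ℕ)^2*(v:ℕ)^2*(w:ℕ)^2
      ≤ (u:ℕ)^a*((u:ℕ)+(v:ℕ))^b*((u:ℕ)+(v:ℕ)+(w:ℕ))^c) : E3 a b c ≠ ∞ := by
  have hle : E3 a b c ≤ E1 * (E1 * E1) := by
    rw [E3, ← sep3]
    refine ENNReal.tsum_le_tsum fun u => ENNReal.tsum_le_tsum fun j =>
      ENNReal.tsum_le_tsum fun k => ?_
    rw [W_mul3, W_mul3]
    exact ENNReal.inv_le_inv.2 (by exact_mod_cast h u j k)
  exact (lt_of_le_of_lt hle (lt_top_iff_ne_top.2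
    (ENNReal.mul_ne_top E1_ne_top (ENNReal.mul_ne_top E1_ne_top E1_ne_top)))).ne

lemma fin222 : E3 2 2 2 ≠ ∞ := by
  refine E3_ne_top 2 2 2 fun u v w => ?_
  exact Nat.mul_le_mul (Nat.mul_le_mul le_rfl (Nat.pow_le_pow_left (by omega) 2))
    (Nat.pow_le_pow_left (by omega) 2)

lemma fin132 : E3 1 3 2 ≠ ∞ := by
  refine E3_ne_top 1 3 2 fun u v w => ?_
  have h1 : (u:ℕ)^2*(v:ℕ)^2 ≤ (u:ℕ)^1*((u:ℕ)+(v:ℕ))^3 := by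
    calc (u:ℕ)^2*(v:ℕ)^2 = (u:ℕ)*((u:ℕ)*(v:ℕ)^2) := by ring
      _ ≤ (u:ℕ)*(((u:ℕ)+(v:ℕ))*((u:ℕ)+(v:ℕ))^2) :=
          Nat.mul_le_mul le_rfl (Nat.mul_le_mul (by omega) (Nat.pow_le_pow_left (by omega) 2))
      _ = (u:ℕ)^1*((u:ℕ)+(v:ℕ))^3 := by ring
  have h2 : (w:ℕ)^2 ≤ ((u:ℕ)+(v:ℕ)+(w:ℕ))^2 := Nat.pow_le_pow_left (by omega) 2
  calc (u:ℕ)^2*(v:ℕ)^2*(w:ℕ)^2 ≤ ((u:ℕ)^1*((u:ℕ)+(v:ℕ))^3)*(((u:ℕ)+(v:ℕ)+(w:ℕ))^2) :=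
        Nat.mul_le_mul h1 h2
    _ = (u:ℕ)^1*((u:ℕ)+(v:ℕ))^3*((u:ℕ)+(v:ℕ)+(w:ℕ))^2 := by ring

lemma fin123 : E3 1 2 3 ≠ ∞ := by
  refine E3_ne_top 1 2 3 fun u v w => ?_
  have h1 : (u:ℕ)^2*(v:ℕ) ≤ (u:ℕ)^1*((u:ℕ)+(v:ℕ))^2 := by
    calc (u:ℕ)^2*(v:ℕ) = (u:ℕ)*((u:ℕ)*(v:ℕ)) := by ring
      _ ≤ (u:ℕ)*(((u:ℕ)+(v:ℕ))*((u:ℕ)+(v:ℕ))) :=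
          Nat.mul_le_mul le_rfl (Nat.mul_le_mul (by omega) (by omega))
      _ = (u:ℕ)^1*((u:ℕ)+(v:ℕ))^2 := by ring
  have h2 : (v:ℕ)*(w:ℕ)^2 ≤ ((u:ℕ)+(v:ℕ)+(w:ℕ))^3 := by
    calc (v:ℕ)*(w:ℕ)^2 ≤ ((u:ℕ)+(v:ℕ)+(w:ℕ))*(((u:ℕ)+(v:ℕ)+(w:ℕ))^2) :=
          Nat.mul_le_mul (by omega) (Nat.pow_le_pow_left (by omega) 2)
      _ = ((u:ℕ)+(v:ℕ)+(w:ℕ))^3 := by ring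
  calc (u:ℕ)^2*(v:ℕ)^2*(w:ℕ)^2 = ((u:ℕ)^2*(v:ℕ))*((v:ℕ)*(w:ℕ)^2) := by ring
    _ ≤ ((u:ℕ)^1*((u:ℕ)+(v:ℕ))^2)*(((u:ℕ)+(v:ℕ)+(w:ℕ))^3) := Nat.mul_le_mul h1 h2
    _ = (u:ℕ)^1*((u:ℕ)+(v:ℕ))^2*((u:ℕ)+(v:ℕ)+(w:ℕ))^3 := by ring

lemma fin213 : E3 2 1 3 ≠ ∞ := by
  refine E3_ne_top 2 1 3 fun u v w => ?_
  have h1 : (u:ℕ)^2*(v:ℕ) ≤ (u:ℕ)^2*((u:ℕ)+(v:ℕ))^1 := by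
    have : (v:ℕ) ≤ ((u:ℕ)+(v:ℕ))^1 := by rw [pow_one]; omega
    exact Nat.mul_le_mul le_rfl this
  have h2 : (v:ℕ)*(w:ℕ)^2 ≤ ((u:ℕ)+(v:ℕ)+(w:ℕ))^3 := by
    calc (v:ℕ)*(w:ℕ)^2 ≤ ((u:ℕ)+(v:ℕ)+(w:ℕ))*(((u:ℕ)+(v:ℕ)+(w:ℕ))^2) :=
          Nat.mul_le_mul (by omega) (Nat.pow_le_pow_left (by omega) 2)
      _ = ((u:ℕ)+(v:ℕ)+(w:ℕ))^3 := by ring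
  calc (u:ℕ)^2*(v:ℕ)^2*(w:ℕ)^2 = ((u:ℕ)^2*(v:ℕ))*((v:ℕ)*(w:ℕ)^2) := by ring
    _ ≤ ((u:ℕ)^2*((u:ℕ)+(v:ℕ))^1)*(((u:ℕ)+(v:ℕ)+(w:ℕ))^3) := Nat.mul_le_mul h1 h2
    _ = (u:ℕ)^2*((u:ℕ)+(v:ℕ))^1*((u:ℕ)+(v:ℕ)+(w:ℕ))^3 := by ring

/-! ### The `T` sum -/

set_option maxHeartbeats 1000000 in
lemma T_eq :
    (∑' q : {q : ℕ × ℕ × ℕ // 0 < q.1 ∧ 0 < q.2.1 ∧ q.2.1 < q.2.2},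
        (((q.1.1 : ℝ) ^ 2 * ((q.1.1 + q.1.2.1 : ℕ) : ℝ) ^ 2 * ((q.1.1 + q.1.2.2 : ℕ) : ℝ) ^ 2)⁻¹
          + 2 * ((q.1.1 : ℝ) * ((q.1.1 + q.1.2.1 : ℕ) : ℝ) ^ 3 * ((q.1.1 + q.1.2.2 : ℕ) : ℝ) ^ 2)⁻¹
          + 2 * ((q.1.1 : ℝ) * ((q.1.1 + q.1.2.1 : ℕ) : ℝ) ^ 2 * ((q.1.1 + q.1.2.2 : ℕ) : ℝ) ^ 3)⁻¹))
      = (E3 2 2 2 + 2 * E3 1 3 2 + 2 * E3 1 2 3).toReal := by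
  have hW : ∀ q : {q : ℕ × ℕ × ℕ // 0 < q.1 ∧ 0 < q.2.1 ∧ q.2.1 < q.2.2},
      (W q.1.1 2 * W (q.1.1 + q.1.2.1) 2 * W (q.1.1 + q.1.2.2) 2
        + 2 * (W q.1.1 1 * W (q.1.1 + q.1.2.1) 3 * W (q.1.1 + q.1.2.2) 2)
        + 2 * (W q.1.1 1 * W (q.1.1 + q.1.2.1) 2 * W (q.1.1 + q.1.2.2) 3)) ≠ ∞ := by
    intro q
    have h1 := q.2.1
    have h2 := q.2.2.1
    have h3 := q.2.2.2
    refine ENNReal.add_ne_top.2 ⟨ENNReal.add_ne_top.2 ⟨?_, ?_⟩, ?_⟩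
    · exact W3_ne_top h1 (by omega) (by omega) 2 2 2
    · exact ENNReal.mul_ne_top (by simp) (W3_ne_top h1 (by omega) (by omega) 1 3 2)
    · exact ENNReal.mul_ne_top (by simp) (W3_ne_top h1 (by omega) (by omega) 1 2 3)
  have hsub : (∑' q : {q : ℕ × ℕ × ℕ // 0 < q.1 ∧ 0 < q.2.1 ∧ q.2.1 < q.2.2},
      (W q.1.1 2 * W (q.1.1 + q.1.2.1) 2 * W (q.1.1 + q.1.2.2) 2
        + 2 * (W q.1.1 1 * W (q.1.1 + q.1.2.1) 3 * W (q.1.1 + q.1.2.2) 2)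
        + 2 * (W q.1.1 1 * W (q.1.1 + q.1.2.1) 2 * W (q.1.1 + q.1.2.2) 3)))
      = E3 2 2 2 + 2 * E3 1 3 2 + 2 * E3 1 2 3 := by
    rw [← qT.tsum_eq (fun q : {q : ℕ × ℕ × ℕ // 0 < q.1 ∧ 0 < q.2.1 ∧ q.2.1 < q.2.2} =>
      (W q.1.1 2 * W (q.1.1 + q.1.2.1) 2 * W (q.1.1 + q.1.2.2) 2
        + 2 * (W q.1.1 1 * W (q.1.1 + q.1.2.1) 3 * W (q.1.1 + q.1.2.2) 2)
        + 2 * (W q.1.1 1 * W (q.1.1 + q.1.2.1) 2 * W (q.1.1 + q.1.2.2) 3)))]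
    rw [ENNReal.tsum_prod']
    have h2 : ∀ i : ℕ+, (∑' jk : ℕ+ × ℕ+,
        (W i 2 * W ((i:ℕ) + (jk.1:ℕ)) 2 * W ((i:ℕ) + ((jk.1:ℕ) + (jk.2:ℕ))) 2
          + 2 * (W i 1 * W ((i:ℕ) + (jk.1:ℕ)) 3 * W ((i:ℕ) + ((jk.1:ℕ) + (jk.2:ℕ))) 2)
          + 2 * (W i 1 * W ((i:ℕ) + (jk.1:ℕ)) 2 * W ((i:ℕ) + ((jk.1:ℕ) + (jk.2:ℕ))) 3)))
        = ∑' (j : ℕ+) (k : ℕ+),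
          (W i 2 * W ((i:ℕ) + (j:ℕ)) 2 * W ((i:ℕ) + (j:ℕ) + (k:ℕ)) 2
            + 2 * (W i 1 * W ((i:ℕ) + (j:ℕ)) 3 * W ((i:ℕ) + (j:ℕ) + (k:ℕ)) 2)
            + 2 * (W i 1 * W ((i:ℕ) + (j:ℕ)) 2 * W ((i:ℕ) + (j:ℕ) + (k:ℕ)) 3)) := by
      intro i
      refine (ENNReal.tsum_prod' (f := fun jk : ℕ+ × ℕ+ =>
        (W i 2 * W ((i:ℕ) + (jk.1:ℕ)) 2 * W ((i:ℕ) + ((jk.1:ℕ) + (jk.2:ℕ))) 2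
          + 2 * (W i 1 * W ((i:ℕ) + (jk.1:ℕ)) 3 * W ((i:ℕ) + ((jk.1:ℕ) + (jk.2:ℕ))) 2)
          + 2 * (W i 1 * W ((i:ℕ) + (jk.1:ℕ)) 2 * W ((i:ℕ) + ((jk.1:ℕ) + (jk.2:ℕ))) 3)))).trans ?_
      refine tsum_congr fun j => tsum_congr fun k => ?_
      rw [← Nat.add_assoc]
    refine (tsum_congr h2).trans ?_
    simp only [ENNReal.tsum_add]
    rw [tsum3_two (fun i j k => W i 1 * W ((i:ℕ) + (j:ℕ)) 3 * W ((i:ℕ) + (j:ℕ) + (k:ℕ)) 2),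
      tsum3_two (fun i j k => W i 1 * W ((i:ℕ) + (j:ℕ)) 2 * W ((i:ℕ) + (j:ℕ) + (k:ℕ)) 3)]
    rfl
  rw [← hsub, ENNReal.tsum_toReal_eq hW]
  refine tsum_congr fun q => ?_
  have h1 := q.2.1
  rw [ENNReal.toReal_add, ENNReal.toReal_add]
  · simp only [ENNReal.toReal_mul, W_toReal, ENNReal.toReal_ofNat, pow_one, mul_inv]
  all_goals
    have h2 := q.2.2.1
    have h3 := q.2.2.2
    have p2 : 0 < (q : ℕ × ℕ × ℕ).1 + (q : ℕ × ℕ × ℕ).2.1 := by omega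
    have p3 : 0 < (q : ℕ × ℕ × ℕ).1 + (q : ℕ × ℕ × ℕ).2.2 := by omega
    first
    | exact W3_ne_top h1 p2 p3 _ _ _
    | exact ENNReal.mul_ne_top (by simp) (W3_ne_top h1 p2 p3 _ _ _)
    | exact ENNReal.add_ne_top.2 ⟨W3_ne_top h1 p2 p3 _ _ _,
        ENNReal.mul_ne_top (by simp) (W3_ne_top h1 p2 p3 _ _ _)⟩

end ShuffleAux

/-- Shuffle product of `ζ(2,2)` and `ζ(2)`:
`ζ(2,2)·ζ(2) = T + 2ζ(2,2,2) + 2ζ(1,3,2) + 2ζ(1,2,3) + 4ζ(2,1,3)`, where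
`T = Σ_{m ≥ 1, 0 < a < c} [1/(m²(m+a)²(m+c)²) + 2/(m(m+a)³(m+c)²) + 2/(m(m+a)²(m+c)³)]`. -/
theorem shuffle_zeta22_zeta2 :
    mzv2 2 2 * zetaVal 2 =
      (∑' q : {q : ℕ × ℕ × ℕ // 0 < q.1 ∧ 0 < q.2.1 ∧ q.2.1 < q.2.2},
        (((q.1.1 : ℝ) ^ 2 * ((q.1.1 + q.1.2.1 : ℕ) : ℝ) ^ 2 * ((q.1.1 + q.1.2.2 : ℕ) : ℝ) ^ 2)⁻¹
          + 2 * ((q.1.1 : ℝ) * ((q.1.1 + q.1.2.1 : ℕ) : ℝ) ^ 3 * ((q.1.1 + q.1.2.2 : ℕ) : ℝ) ^ 2)⁻¹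
          + 2 * ((q.1.1 : ℝ) * ((q.1.1 + q.1.2.1 : ℕ) : ℝ) ^ 2 * ((q.1.1 + q.1.2.2 : ℕ) : ℝ) ^ 3)⁻¹))
      + 2 * mzv3 2 2 2 + 2 * mzv3 1 3 2 + 2 * mzv3 1 2 3 + 4 * mzv3 2 1 3 := by
  have n1 := ShuffleAux.fin222
  have n2 := ShuffleAux.fin132
  have n3 := ShuffleAux.fin123
  have n4 := ShuffleAux.fin213
  rw [ShuffleAux.mzv2_eq, ShuffleAux.zeta_eq, ShuffleAux.mzv3_eq, ShuffleAux.mzv3_eq,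
    ShuffleAux.mzv3_eq, ShuffleAux.mzv3_eq, ShuffleAux.T_eq, ← ENNReal.toReal_mul,
    ShuffleAux.key_s14]
  rw [ENNReal.toReal_add, ENNReal.toReal_add, ENNReal.toReal_add, ENNReal.toReal_add]
  · simp only [ENNReal.toReal_mul, ENNReal.toReal_ofNat]
  all_goals
    first
    | exact ENNReal.add_ne_top.2 ⟨ENNReal.add_ne_top.2 ⟨n1,
        ENNReal.mul_ne_top (by simp) n2⟩, ENNReal.mul_ne_top (by simp) n3⟩
    | exact ENNReal.mul_ne_top (by simp) n1
    | exact ENNReal.mul_ne_top (by simp) n2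
    | exact ENNReal.mul_ne_top (by simp) n3
    | exact ENNReal.mul_ne_top (by simp) n4
    | exact ENNReal.add_ne_top.2 ⟨ENNReal.add_ne_top.2 ⟨ENNReal.add_ne_top.2 ⟨ENNReal.add_ne_top.2
        ⟨n1, ENNReal.mul_ne_top (by simp) n2⟩, ENNReal.mul_ne_top (by simp) n3⟩,
        ENNReal.mul_ne_top (by simp) n1⟩, ENNReal.mul_ne_top (by simp) n2⟩
    | (refine ENNReal.add_ne_top.2 ⟨?_, ?_⟩ <;>
        first
        | exact ENNReal.mul_ne_top (by simp) n1
        | exact ENNReal.mul_ne_top (by simp) n2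
        | exact ENNReal.mul_ne_top (by simp) n3
        | exact ENNReal.mul_ne_top (by simp) n4
        | exact ENNReal.add_ne_top.2 ⟨ENNReal.add_ne_top.2 ⟨n1,
            ENNReal.mul_ne_top (by simp) n2⟩, ENNReal.mul_ne_top (by simp) n3⟩
        | (refine ENNReal.add_ne_top.2 ⟨?_, ?_⟩ <;>
            first
            | exact ENNReal.mul_ne_top (by simp) n1
            | exact ENNReal.mul_ne_top (by simp) n2
            | exact ENNReal.mul_ne_top (by simp) n3
            | exact ENNReal.mul_ne_top (by simp) n4
            | exact ENNReal.add_ne_top.2 ⟨ENNReal.add_ne_top.2 ⟨n1,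
                ENNReal.mul_ne_top (by simp) n2⟩, ENNReal.mul_ne_top (by simp) n3⟩
            | exact ENNReal.add_ne_top.2 ⟨ENNReal.add_ne_top.2 ⟨ENNReal.add_ne_top.2 ⟨n1,
                ENNReal.mul_ne_top (by simp) n2⟩, ENNReal.mul_ne_top (by simp) n3⟩,
                ENNReal.mul_ne_top (by simp) n1⟩))
end

section
/- Shuffle product preserves admissibility and multiplicativity for 2-labeled posets (Yamamoto, as used in Theorem 3.2): let X and Y be finite posets with labeling maps δ_X : X → {0,1}, δ_Y : Y → {0,1} that are admissible (label 1 on all minimal elements, label 0 on all maximal elements), and for an admissible labeled poset (Z, δ) define I(Z) = ∫_{Δ(Z)} ∏_{z∈Z} ω_{δ(z)}(t_z), where Δ(Z) = {(t_z) ∈ [0,1]^Z : t_z < t_w whenever z < w}, ω₀(t) = dt/t, ω₁(t) = dt/(1−t). Then the disjoint union X ⊔ Y with the induced order (no relations between X and Y) and labeling is admissible, the integral I(X ⊔ Y) converges, and I(X ⊔ Y) = I(X)·I(Y). -/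
open MeasureTheory

/-- The one-forms `ω₀(t) = dt/t`, `ω₁(t) = dt/(1-t)` (as density functions), indexed by a
label in `Bool` (`false ↔ 0`, `true ↔ 1`). -/
noncomputable def omegaFn (b : Bool) (t : ℝ) : ℝ := if b then (1 - t)⁻¹ else t⁻¹

/-- `Δ(Z) = {(t_z) ∈ [0,1]^Z | t_z < t_w whenever z < w}`. -/
def posetSimplex (Z : Type*) [PartialOrder Z] : Set (Z → ℝ) :=
  {t | (∀ z, 0 ≤ t z ∧ t z ≤ 1) ∧ ∀ z w : Z, z < w → t z < t w}

/-- A labeling is admissible if minimal elements are labeled `1` and maximal elements `0`. -/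
def Admissible {Z : Type*} [PartialOrder Z] (δ : Z → Bool) : Prop :=
  (∀ z, IsMin z → δ z = true) ∧ ∀ z, IsMax z → δ z = false

/-- `I(Z) = ∫_{Δ(Z)} ∏_{z ∈ Z} ω_{δ(z)}(t_z)`. -/
noncomputable def posetIntegral (Z : Type*) [Fintype Z] [PartialOrder Z] (δ : Z → Bool) : ℝ :=
  ∫ t in posetSimplex Z, ∏ z, omegaFn (δ z) (t z)


/-!
The product formula is Fubini's theorem: under `(X ⊕ Y → ℝ) ≃ (X → ℝ) × (Y → ℝ)` the simplex
`Δ(X ⊔ Y)` becomes `Δ(X) × Δ(Y)` and the integrand factors.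

Convergence comes from a domination. Let `n = |Z|` and `a = 1 - 1/n`. At a point of `Δ(Z)`, an
index `z₀` with the smallest coordinate is minimal in `Z`, hence labelled `1`, so `t_{z₀}` does not
occur in `∏_{δ z = 0} t_z`; since `t_{z₀} ≤ (∏_z t_z)^{1/n}` and all `t_z ≤ 1`, this gives
`(∏_z t_z)^a ≤ ∏_{δ z = 0} t_z`. Symmetrically, a maximal coordinate bounds `∏_{δ z = 1} (1 - t_z)`.
Hence the integrand is at most `∏_z t_z^{-a} (1 - t_z)^{-a}`, which is integrable as `-a > -1`.
-/

open Finset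

theorem StrictMono.isMin_of_forall_apply_le {α β : Type*} [Preorder α] [Preorder β] {f : α → β}
    (hf : StrictMono f) {a : α} (ha : ∀ b, f a ≤ f b) : IsMin a :=
  fun b hba => by_contra fun hab => (hf (lt_of_le_not_ge hba hab)).not_ge (ha b)

theorem StrictMono.isMax_of_forall_le_apply {α β : Type*} [Preorder α] [Preorder β] {f : α → β}
    (hf : StrictMono f) {a : α} (ha : ∀ b, f b ≤ f a) : IsMax a :=
  hf.dual.isMin_of_forall_apply_le (α := αᵒᵈ) (β := βᵒᵈ) ha

theorem prod_rpow_le_prod_of_min_notMem {ι : Type*} [Fintype ι] {u : ι → ℝ}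
    (hu0 : ∀ i, 0 < u i) (hu1 : ∀ i, u i ≤ 1) {s : Finset ι} {i₀ : ι} (hi₀ : i₀ ∉ s)
    (hmin : ∀ i, u i₀ ≤ u i) :
    (∏ i, u i) ^ (1 - (Fintype.card ι : ℝ)⁻¹) ≤ ∏ i ∈ s, u i := by
  classical
  have : Nonempty ι := ⟨i₀⟩
  have hP : 0 < ∏ i, u i := prod_pos fun i _ => hu0 i
  have hroot : u i₀ ≤ (∏ i, u i) ^ (Fintype.card ι : ℝ)⁻¹ := by
    have hpow : u i₀ ^ Fintype.card ι ≤ ∏ i, u i := by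
      simpa using prod_le_prod (s := univ) (fun i _ => (hu0 i₀).le) fun i _ => hmin i
    calc u i₀ = (u i₀ ^ Fintype.card ι) ^ (Fintype.card ι : ℝ)⁻¹ :=
          (Real.pow_rpow_inv_natCast (hu0 i₀).le Fintype.card_ne_zero).symm
      _ ≤ _ := Real.rpow_le_rpow (pow_nonneg (hu0 i₀).le _) hpow (by positivity)
  have hcompl : ∏ i ∈ sᶜ, u i ≤ u i₀ := by
    rw [← mul_prod_erase _ _ (mem_compl.2 hi₀)]
    exact mul_le_of_le_one_right (hu0 i₀).le
      (prod_le_one (fun i _ => (hu0 i).le) fun i _ => hu1 i)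
  have hsplit : ∏ i, u i ≤ (∏ i ∈ s, u i) * (∏ i, u i) ^ (Fintype.card ι : ℝ)⁻¹ := by
    conv_lhs => rw [← prod_mul_prod_compl s]
    exact mul_le_mul_of_nonneg_left (hcompl.trans hroot) (prod_nonneg fun i _ => (hu0 i).le)
  refine le_of_mul_le_mul_right ?_ (Real.rpow_pos_of_pos hP (Fintype.card ι : ℝ)⁻¹)
  rwa [← Real.rpow_add hP, sub_add_cancel, Real.rpow_one]

theorem integrableOn_rpow_mul_one_sub_rpow {e : ℝ} (he : -1 < e) (he0 : e ≤ 0) :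
    IntegrableOn (fun s : ℝ => s ^ e * (1 - s) ^ e) (Set.Ioo 0 1) := by
  have hleft : IntegrableOn (fun s : ℝ => s ^ e) (Set.Ioo 0 1) :=
    (intervalIntegral.integrableOn_Ioo_rpow_iff one_pos).2 he
  have hright : IntegrableOn (fun s : ℝ => (1 - s) ^ e) (Set.Ioo 0 1) := by
    have := ((intervalIntegral.intervalIntegrable_rpow' he (a := 0) (b := 1)).comp_sub_left 1).symm
    simpa [intervalIntegrable_iff_integrableOn_Ioo_of_le] using this
  refine ((hleft.add hright).const_mul ((2⁻¹ : ℝ) ^ e)).mono'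
    (Measurable.aestronglyMeasurable (by fun_prop)) ?_
  filter_upwards [ae_restrict_mem measurableSet_Ioo] with s ⟨hs0, hs1⟩
  have hx : 0 ≤ s ^ e := Real.rpow_nonneg hs0.le e
  have hy : 0 ≤ (1 - s) ^ e := Real.rpow_nonneg (by linarith) e
  change |s ^ e * (1 - s) ^ e| ≤ 2⁻¹ ^ e * (s ^ e + (1 - s) ^ e)
  rw [abs_of_nonneg (mul_nonneg hx hy)]
  -- the factor whose base is at least `1/2` is at most `(1/2) ^ e`
  rcases le_total s 2⁻¹ with hs | hs
  · have : (1 - s) ^ e ≤ (2⁻¹ : ℝ) ^ e := Real.rpow_le_rpow_of_nonpos (by norm_num) (by linarith) he0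
    nlinarith
  · have : s ^ e ≤ (2⁻¹ : ℝ) ^ e := Real.rpow_le_rpow_of_nonpos (by norm_num) hs he0
    nlinarith

theorem omegaFn_eq_inv (b : Bool) (t : ℝ) : omegaFn b t = (if b then 1 - t else t)⁻¹ := by
  cases b <;> rfl

theorem omegaFn_nonneg (b : Bool) {t : ℝ} (ht : t ∈ Set.Ioo 0 1) : 0 ≤ omegaFn b t := by
  rw [omegaFn_eq_inv]
  exact inv_nonneg.2 (by split_ifs <;> linarith [ht.1, ht.2])

theorem measurable_omegaFn (b : Bool) : Measurable (omegaFn b) := by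
  cases b
  · exact measurable_inv
  · exact (measurable_const.sub measurable_id).inv

theorem measurable_prod_omegaFn {Z : Type*} [Fintype Z] (δ : Z → Bool) :
    Measurable fun t : Z → ℝ => ∏ z, omegaFn (δ z) (t z) :=
  Finset.measurable_prod _ fun z _ => (measurable_omegaFn _).comp (measurable_pi_apply z)

section Convergence

variable {Z : Type*} [Fintype Z] [PartialOrder Z]

theorem measurableSet_posetSimplex : MeasurableSet (posetSimplex Z) := by
  simp only [posetSimplex, Set.ofPred_and, Set.ofPred_forall]
  measurability

theorem ae_restrict_posetSimplex_mem_Ioo :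
    ∀ᵐ t ∂volume.restrict (posetSimplex Z), ∀ z, t z ∈ Set.Ioo 0 1 := by
  have hbdry : ∀ᵐ t : Z → ℝ, ∀ z, t z ≠ 0 ∧ t z ≠ 1 :=
    ae_all_iff.2 fun z => (Measure.ae_eval_ne _ z 0).and (Measure.ae_eval_ne _ z 1)
  filter_upwards [ae_restrict_mem measurableSet_posetSimplex, ae_restrict_of_ae hbdry]
    with t ht hne z
  exact ⟨(ht.1 z).1.lt_of_ne' (hne z).1, (ht.1 z).2.lt_of_ne (hne z).2⟩

theorem Admissible.prod_omegaFn_le {δ : Z → Bool} (hδ : Admissible δ) {t : Z → ℝ}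
    (ht : t ∈ posetSimplex Z) (ht01 : ∀ z, t z ∈ Set.Ioo 0 1) :
    ∏ z, omegaFn (δ z) (t z) ≤
      ∏ z, t z ^ (-(1 - (Fintype.card Z : ℝ)⁻¹)) * (1 - t z) ^ (-(1 - (Fintype.card Z : ℝ)⁻¹)) := by
  classical
  rcases isEmpty_or_nonempty Z with hZ | hZ
  · simp
  set a := 1 - (Fintype.card Z : ℝ)⁻¹
  have hmono : StrictMono t := fun z w => ht.2 z w
  have ht0 z : 0 < t z := (ht01 z).1
  have ht1 z : 0 < 1 - t z := sub_pos.2 (ht01 z).2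
  obtain ⟨zmin, -, hzmin⟩ := exists_min_image univ t univ_nonempty
  obtain ⟨zmax, -, hzmax⟩ := exists_max_image univ t univ_nonempty
  have hδmin := hδ.1 zmin (hmono.isMin_of_forall_apply_le fun z => hzmin z (mem_univ z))
  have hδmax := hδ.2 zmax (hmono.isMax_of_forall_le_apply fun z => hzmax z (mem_univ z))
  have hlabel0 : (∏ z, t z) ^ a ≤ ∏ z ∈ univ.filter (fun z => ¬δ z = true), t z :=
    prod_rpow_le_prod_of_min_notMem ht0 (fun z => (ht01 z).2.le) (by simp [hδmin])
      fun z => hzmin z (mem_univ z)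
  have hlabel1 : (∏ z, (1 - t z)) ^ a ≤ ∏ z ∈ univ.filter (fun z => δ z = true), (1 - t z) :=
    prod_rpow_le_prod_of_min_notMem (i₀ := zmax) ht1 (fun z => by linarith [ht0 z])
      (by simp [hδmax]) fun z => by linarith [hzmax z (mem_univ z)]
  have hP0 : 0 < ∏ z, t z := prod_pos fun z _ => ht0 z
  have hP1 : 0 < ∏ z, (1 - t z) := prod_pos fun z _ => ht1 z
  calc ∏ z, omegaFn (δ z) (t z)
      = ((∏ z ∈ univ.filter (fun z => δ z = true), (1 - t z)) *
          ∏ z ∈ univ.filter (fun z => ¬δ z = true), t z)⁻¹ := by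
        simp_rw [omegaFn_eq_inv, prod_inv_distrib, prod_ite]
    _ ≤ ((∏ z, (1 - t z)) ^ a * (∏ z, t z) ^ a)⁻¹ :=
        inv_anti₀ (mul_pos (Real.rpow_pos_of_pos hP1 a) (Real.rpow_pos_of_pos hP0 a))
          (mul_le_mul hlabel1 hlabel0 (Real.rpow_nonneg hP0.le a)
            (prod_nonneg fun z _ => (ht1 z).le))
    _ = _ := by
        rw [prod_mul_distrib, Real.finsetProd_rpow _ _ fun z _ => (ht0 z).le,
          Real.finsetProd_rpow _ _ fun z _ => (ht1 z).le, Real.rpow_neg hP0.le,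
          Real.rpow_neg hP1.le, mul_inv, mul_comm]

theorem Admissible.integrableOn_posetSimplex {δ : Z → Bool} (hδ : Admissible δ) :
    IntegrableOn (fun t : Z → ℝ => ∏ z, omegaFn (δ z) (t z)) (posetSimplex Z) := by
  set e := -(1 - (Fintype.card Z : ℝ)⁻¹)
  set g := (Set.Ioo (0 : ℝ) 1).indicator fun s => s ^ e * (1 - s) ^ e
  have hg : Integrable fun t : Z → ℝ => ∏ z, g (t z) := by
    refine Integrable.fintype_prod (f := fun _ => g) fun z => ?_
    have hcard : (1 : ℝ) ≤ Fintype.card Z := by exact_mod_cast Fintype.card_pos_iff.2 ⟨z⟩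
    have he : -1 < e := by simp only [e]; linarith [inv_pos.2 (zero_lt_one.trans_le hcard)]
    have he0 : e ≤ 0 := by simp only [e]; linarith [inv_le_one_of_one_le₀ hcard]
    exact (integrable_indicator_iff measurableSet_Ioo).2 (integrableOn_rpow_mul_one_sub_rpow he he0)
  refine hg.integrableOn.mono' (measurable_prod_omegaFn δ).aestronglyMeasurable ?_
  filter_upwards [ae_restrict_mem measurableSet_posetSimplex, ae_restrict_posetSimplex_mem_Ioo]
    with t ht ht01
  rw [Real.norm_of_nonneg (prod_nonneg fun z _ => omegaFn_nonneg _ (ht01 z))]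
  simpa only [g, Set.indicator_of_mem (ht01 _)] using hδ.prod_omegaFn_le ht ht01

end Convergence

section DisjointUnion

variable {X Y : Type*} [PartialOrder X] [PartialOrder Y]

theorem Admissible.sum_elim {δX : X → Bool} {δY : Y → Bool} (hX : Admissible δX)
    (hY : Admissible δY) : Admissible (Sum.elim δX δY) := by
  constructor <;> rintro (x | y) hxy
  · exact hX.1 x fun w hw => Sum.inl_le_inl_iff.1 (hxy (Sum.inl_le_inl_iff.2 hw))
  · exact hY.1 y fun w hw => Sum.inr_le_inr_iff.1 (hxy (Sum.inr_le_inr_iff.2 hw))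
  · exact hX.2 x fun w hw => Sum.inl_le_inl_iff.1 (hxy (Sum.inl_le_inl_iff.2 hw))
  · exact hY.2 y fun w hw => Sum.inr_le_inr_iff.1 (hxy (Sum.inr_le_inr_iff.2 hw))

theorem posetSimplex_sum : posetSimplex (X ⊕ Y) =
    MeasurableEquiv.sumPiEquivProdPi (fun _ => ℝ) ⁻¹' (posetSimplex X ×ˢ posetSimplex Y) := by
  ext t
  simp only [posetSimplex, Sum.forall, Sum.inl_lt_inl_iff, Sum.not_inl_lt_inr, Sum.not_inr_lt_inl,
    Sum.inr_lt_inr_iff, IsEmpty.forall_iff, implies_true, and_true, true_and, Set.mem_ofPred_eq,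
    Set.mem_preimage, Set.mem_prod]
  tauto

theorem posetIntegral_sum [Fintype X] [Fintype Y] (δX : X → Bool) (δY : Y → Bool) :
    posetIntegral (X ⊕ Y) (Sum.elim δX δY) = posetIntegral X δX * posetIntegral Y δY := by
  rw [posetIntegral, posetSimplex_sum, posetIntegral, posetIntegral, ← setIntegral_prod_mul,
    ← Measure.volume_eq_prod]
  refine Eq.trans ?_ ((volume_measurePreserving_sumPiEquivProdPi fun _ : X ⊕ Y => ℝ)
    |>.setIntegral_preimage_emb (MeasurableEquiv.measurableEmbedding _)
      (fun p : (X → ℝ) × (Y → ℝ) => (∏ x, omegaFn (δX x) (p.1 x)) * ∏ y, omegaFn (δY y) (p.2 y)) _)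
  simp only [Fintype.prod_sum_type, Sum.elim_inl, Sum.elim_inr]
  rfl

end DisjointUnion

/-- Yamamoto: for admissible labeled finite posets `X`, `Y`, the disjoint union `X ⊕ Y`
(with no relations between the summands) is admissible, its associated integral converges,
and `I(X ⊔ Y) = I(X) · I(Y)`. -/
theorem poset_shuffle_product (X Y : Type) [Fintype X] [Fintype Y]
    [PartialOrder X] [PartialOrder Y] (δX : X → Bool) (δY : Y → Bool)
    (hX : Admissible δX) (hY : Admissible δY) :
    Admissible (Sum.elim δX δY : X ⊕ Y → Bool)
    ∧ IntegrableOn (fun t : (X ⊕ Y) → ℝ => ∏ z, omegaFn (Sum.elim δX δY z) (t z))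
        (posetSimplex (X ⊕ Y)) volume
    ∧ posetIntegral (X ⊕ Y) (Sum.elim δX δY) = posetIntegral X δX * posetIntegral Y δY :=
  ⟨hX.sum_elim hY, (hX.sum_elim hY).integrableOn_posetSimplex, posetIntegral_sum δX δY⟩
end
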